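/- arXiv:1510.00054 — 14 statements merged into one kernel-verified Lean document; each statement's English description precedes it below -/
import Mathlib

section
/- Let k ⊆ K be a field extension where k has characteristic 2, let n ≥ 2, and let A ∈ GL(n,K). Then every entry of A·X·A⁻¹ lies in k for every X ∈ SL(n,k) (viewing X as a matrix over K via the inclusion of k into K) if and only if there exist a nonzero p ∈ K and B ∈ GL(n,k) such that A = p·B. -/
/-!
The matrices of determinant one span the full matrix algebra: off the diagonal
`single i j 1 = transvection i j 1 - 1`, and on it
`single i i 1 = transvection i m 1 * transvection m i 1 - 1 - single i m 1 - single m i 1`.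
So if conjugation by `A` keeps `SL(n,k)` inside `M_n(k)`, it keeps all of `M_n(k)` there, in
particular the rank-one matrices `single i j 1`, whose conjugates have entries `A s i * A⁻¹ j t`.
Scaling `A` by a nonzero entry `A⁻¹ j t` therefore gives a matrix over `k`.
-/

open Matrix

namespace Matrix

section CommRing

variable {n R : Type*} [Fintype n] [DecidableEq n] [CommRing R]

theorem mul_single_one_mul_apply (A B : Matrix n n R) (i j s t : n) :
    (A * single i j (1 : R) * B) s t = A s i * B j t := by
  simp [mul_apply, single_apply, ite_and]

theorem single_one_mem_span_det_eq_one_of_ne {i j : n} (hij : i ≠ j) :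
    single i j (1 : R) ∈ Submodule.span R {X : Matrix n n R | X.det = 1} := by
  have : single i j (1 : R) = transvection i j 1 - 1 := (add_sub_cancel_left _ _).symm
  rw [this]
  exact sub_mem (Submodule.subset_span (det_transvection_of_ne i j hij 1))
    (Submodule.subset_span det_one)

theorem single_one_mem_span_det_eq_one_self (i : n) :
    single i i (1 : R) ∈ Submodule.span R {X : Matrix n n R | X.det = 1} := by
  by_cases h : ∃ m, m ≠ i
  · obtain ⟨m, hm⟩ := h
    have expand : single i i (1 : R) = transvection i m 1 * transvection m i 1 - 1
        - single i m 1 - single m i 1 := by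
      simp only [transvection, add_mul, mul_add, one_mul, mul_one, single_mul_single_same]
      abel
    have hdet : (transvection i m (1 : R) * transvection m i 1).det = 1 := by
      rw [det_mul, det_transvection_of_ne i m hm.symm, det_transvection_of_ne m i hm, one_mul]
    rw [expand]
    exact sub_mem (sub_mem (sub_mem (Submodule.subset_span hdet) (Submodule.subset_span det_one))
      (single_one_mem_span_det_eq_one_of_ne hm.symm)) (single_one_mem_span_det_eq_one_of_ne hm)
  · push Not at h
    have : single i i (1 : R) = 1 := by
      ext a b
      simp [h a, h b, one_apply]
    exact this ▸ Submodule.subset_span det_one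

theorem single_mem_span_det_eq_one (i j : n) (c : R) :
    single i j c ∈ Submodule.span R {X : Matrix n n R | X.det = 1} := by
  rw [← mul_one c, ← smul_eq_mul, ← smul_single]
  refine Submodule.smul_mem _ c ?_
  rcases eq_or_ne i j with rfl | hij
  · exact single_one_mem_span_det_eq_one_self i
  · exact single_one_mem_span_det_eq_one_of_ne hij

theorem span_det_eq_one : Submodule.span R {X : Matrix n n R | X.det = 1} = ⊤ :=
  eq_top_iff.2 fun X _ => X.matrix_eq_sum_single ▸
    Submodule.sum_mem _ fun i _ => Submodule.sum_mem _ fun j _ => single_mem_span_det_eq_one i j _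

theorem map_mem_of_forall_det_eq_one {M : Type*} [AddCommGroup M] [Module R M]
    (f : Matrix n n R →ₗ[R] M) (p : Submodule R M) (h : ∀ X : Matrix n n R, X.det = 1 → f X ∈ p)
    (X : Matrix n n R) : f X ∈ p := by
  have hle : Submodule.span R {X : Matrix n n R | X.det = 1} ≤ p.comap f := Submodule.span_le.2 h
  rw [span_det_eq_one] at hle
  exact hle Submodule.mem_top

end CommRing

section Field

variable {n k K : Type*} [Fintype n] [DecidableEq n] [Field k] [Field K] [Algebra k K]

theorem conj_map_apply_mem_range_of_forall_det_eq_one (A B : Matrix n n K)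
    (h : ∀ X : Matrix n n k, X.det = 1 → ∀ s t,
      (A * X.map (algebraMap k K) * B) s t ∈ Set.range (algebraMap k K))
    (X : Matrix n n k) (s t : n) :
    (A * X.map (algebraMap k K) * B) s t ∈ Set.range (algebraMap k K) :=
  map_mem_of_forall_det_eq_one (entryLinearMap k K s t ∘ₗ LinearMap.mulLeftRight k (A, B) ∘ₗ
    (Algebra.ofId k K).mapMatrix.toLinearMap) (LinearMap.range (Algebra.linearMap k K))
    (fun X hX => h X hX s t) X

theorem exists_smul_eq_map_of_conj_map_mem_range (A : (Matrix n n K)ˣ)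
    (h : ∀ X : Matrix n n k, X.det = 1 → ∀ s t,
      ((A : Matrix n n K) * X.map (algebraMap k K) * (↑A⁻¹ : Matrix n n K)) s t ∈
        Set.range (algebraMap k K)) :
    ∃ p : K, p ≠ 0 ∧ ∃ B : (Matrix n n k)ˣ,
      (A : Matrix n n K) = p • (B : Matrix n n k).map (algebraMap k K) := by
  rcases isEmpty_or_nonempty n with _ | _
  · exact ⟨1, one_ne_zero, 1, Subsingleton.elim _ _⟩
  obtain ⟨j, t, hq⟩ : ∃ j t, (↑A⁻¹ : Matrix n n K) j t ≠ 0 := by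
    by_contra! h0
    exact (A⁻¹).ne_zero (Matrix.ext h0)
  have entry_mem (s i : n) : (A : Matrix n n K) s i * (↑A⁻¹ : Matrix n n K) j t ∈
      Set.range (algebraMap k K) := by
    have := conj_map_apply_mem_range_of_forall_det_eq_one _ _ h (single i j 1) s t
    rwa [map_single, map_one, mul_single_one_mul_apply] at this
  choose C hC using entry_mem
  have hCA : (of C).map (algebraMap k K) = (↑A⁻¹ : Matrix n n K) j t • (A : Matrix n n K) := by
    ext s i
    simp [hC, mul_comm]
  have hdet : (of C).det ≠ 0 := by
    rw [← map_ne_zero (algebraMap k K), RingHom.map_det, RingHom.mapMatrix_apply, hCA, det_smul]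
    exact mul_ne_zero (pow_ne_zero _ hq) ((isUnit_iff_isUnit_det _).1 A.isUnit).ne_zero
  obtain ⟨B, hB⟩ := (isUnit_iff_isUnit_det _).2 hdet.isUnit
  refine ⟨_, inv_ne_zero hq, B, ?_⟩
  rw [hB, hCA, smul_smul, inv_mul_cancel₀ hq, one_smul]

end Field

theorem conj_map_eq_map_conj {n k K : Type*} [Fintype n] [DecidableEq n] [CommRing k] [Field K]
    (f : k →+* K) {A : (Matrix n n K)ˣ} {p : K} (hp : p ≠ 0) {B : (Matrix n n k)ˣ}
    (hA : (A : Matrix n n K) = p • (B : Matrix n n k).map f) (X : Matrix n n k) :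
    (A : Matrix n n K) * X.map f * (↑A⁻¹ : Matrix n n K) =
      ((B : Matrix n n k) * X * (↑B⁻¹ : Matrix n n k)).map f := by
  have hAinv : (↑A⁻¹ : Matrix n n K) = p⁻¹ • (↑B⁻¹ : Matrix n n k).map f := by
    refine Units.inv_eq_of_mul_eq_one_right ?_
    rw [hA, smul_mul_smul_comm, mul_inv_cancel₀ hp, one_smul, ← RingHom.mapMatrix_apply,
      ← RingHom.mapMatrix_apply, ← map_mul, Units.mul_inv, map_one]
  rw [hAinv, hA, smul_mul, smul_mul_smul_comm, mul_inv_cancel₀ hp, one_smul]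
  simp only [← RingHom.mapMatrix_apply, map_mul]

end Matrix

theorem stmt_1_general {k K : Type*} [Field k] [Field K] [Algebra k K]
    {n : ℕ} (A : (Matrix (Fin n) (Fin n) K)ˣ) :
    (∀ X : Matrix (Fin n) (Fin n) k, X.det = 1 → ∀ i j : Fin n,
        ((A : Matrix (Fin n) (Fin n) K) * X.map (algebraMap k K) *
          (↑A⁻¹ : Matrix (Fin n) (Fin n) K)) i j ∈ Set.range (algebraMap k K)) ↔
      ∃ p : K, p ≠ 0 ∧ ∃ B : (Matrix (Fin n) (Fin n) k)ˣ,
        (A : Matrix (Fin n) (Fin n) K) =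
          p • (B : Matrix (Fin n) (Fin n) k).map (algebraMap k K) := by
  refine ⟨exists_smul_eq_map_of_conj_map_mem_range A, ?_⟩
  rintro ⟨p, hp, B, hA⟩ X - i j
  rw [conj_map_eq_map_conj _ hp hA]
  exact ⟨_, rfl⟩

/-- Let k ⊆ K be a field extension with char k = 2, n ≥ 2, and
A ∈ GL(n,K). Then every entry of A·X·A⁻¹ lies in k for every X ∈ SL(n,k)
(viewed over K) iff A = p·B for some nonzero p ∈ K and B ∈ GL(n,k). -/
theorem stmt_1 {k K : Type*} [Field k] [Field K] [Algebra k K] [CharP k 2]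
    {n : ℕ} (hn : 2 ≤ n) (A : (Matrix (Fin n) (Fin n) K)ˣ) :
    (∀ X : Matrix (Fin n) (Fin n) k, X.det = 1 → ∀ i j : Fin n,
        ((A : Matrix (Fin n) (Fin n) K) * X.map (algebraMap k K) *
          (↑A⁻¹ : Matrix (Fin n) (Fin n) K)) i j ∈ Set.range (algebraMap k K)) ↔
      ∃ p : K, p ≠ 0 ∧ ∃ B : (Matrix (Fin n) (Fin n) k)ˣ,
        (A : Matrix (Fin n) (Fin n) K) =
          p • (B : Matrix (Fin n) (Fin n) k).map (algebraMap k K) :=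
  stmt_1_general A
end

section
/- Let k be a field of characteristic 2 and let A ∈ GL(2,k). The map Inn_A is a k-involution of SL(2,k) (that is, Inn_A ∘ Inn_A is the identity on SL(2,k) but Inn_A is not the identity on SL(2,k)) if and only if there exist a nonzero p ∈ k and C ∈ GL(2,k) such that C·A·C⁻¹ = L_p, where L_p is the 2×2 matrix with rows (0,1) and (p,0). -/
/-!
Inn_A fixes SL(2,k) pointwise iff A commutes with all transvections, i.e. iff A is scalar.
Hence Inn_A is a k-involution iff A² is scalar but A is not. By Cayley–Hamilton,
A² = tr(A)·A − det(A), so this forces tr A = 0, and in characteristic 2 a non-scalar traceless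
matrix has a cyclic vector, in whose basis it becomes L_{det A}. Conversely L_p² = p.
-/

theorem IsConj.eq_of_mem_center {α : Type*} [Monoid α] {a b : α} (h : IsConj a b)
    (ha : a ∈ Set.center α) : b = a := by
  obtain ⟨c, hc⟩ := h
  exact (Units.mul_left_inj c).mp <| hc.eq.symm.trans ((Set.mem_center_iff.mp ha).comm c).symm

namespace Matrix

section CommRing

variable {n R : Type*} [Fintype n] [DecidableEq n] [CommRing R]

theorem mem_range_scalar_iff_forall_det_eq_one_commute {M : Matrix n n R} :
    M ∈ Set.range (scalar n) ↔ ∀ X : Matrix n n R, X.det = 1 → Commute M X := by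
  refine ⟨?_, fun h => mem_range_scalar_of_commute_transvectionStruct fun t => (h _ t.det).symm⟩
  rintro ⟨r, rfl⟩ X -
  exact scalar_commute r (fun _ => Commute.all _ _) X

end CommRing

section Fin2

variable {R : Type*} [CommRing R]

theorem mul_self_fin_two (M : Matrix (Fin 2) (Fin 2) R) :
    M * M = M.trace • M - scalar (Fin 2) M.det := by
  ext i j
  fin_cases i <;> fin_cases j <;>
    simp [mul_apply, Fin.sum_univ_two, trace_fin_two, det_fin_two] <;> ring

theorem isConj_of_isUnit_apply_one_zero {M : Matrix (Fin 2) (Fin 2) R} (h : IsUnit (M 1 0)) :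
    IsConj M !![0, 1; -M.det, M.trace] := by
  -- the rows of the conjugating matrix are the cyclic vector `e₂` and `e₂ M`
  have hC : IsUnit !![0, 1; M 1 0, M 1 1] := by
    rw [isUnit_iff_isUnit_det, det_fin_two_of]
    simpa using h.neg
  refine ⟨hC.unit, ?_⟩
  rw [SemiconjBy, IsUnit.unit_spec, eta_fin_two M]
  ext i j
  fin_cases i <;> fin_cases j <;>
    simp [mul_apply, Fin.sum_univ_two, trace_fin_two, det_fin_two] <;> ring

theorem isConj_swap (M : Matrix (Fin 2) (Fin 2) R) :
    IsConj M !![M 1 1, M 1 0; M 0 1, M 0 0] := by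
  have hS : (!![0, 1; 1, 0] : Matrix (Fin 2) (Fin 2) R) * !![0, 1; 1, 0] = 1 := by
    simp [one_fin_two]
  refine ⟨⟨_, _, hS, hS⟩, ?_⟩
  rw [SemiconjBy, eta_fin_two M]
  simp

end Fin2

section Field

variable {K : Type*} [Field K]

theorem trace_eq_zero_of_mul_self_mem_range_scalar {M : Matrix (Fin 2) (Fin 2) K}
    (hsq : M * M ∈ Set.range (scalar (Fin 2))) (hM : M ∉ Set.range (scalar (Fin 2))) :
    M.trace = 0 := by
  obtain ⟨s, hs⟩ := hsq
  by_contra htr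
  refine hM ⟨M.trace⁻¹ * (s + M.det), ?_⟩
  have h := mul_self_fin_two M
  rw [← hs, eq_sub_iff_add_eq, ← map_add, eq_comm] at h
  rw [map_mul, ← h, scalar_apply, ← smul_eq_diagonal_mul, smul_smul, inv_mul_cancel₀ htr, one_smul]

theorem isConj_of_trace_eq_zero [CharP K 2] {M : Matrix (Fin 2) (Fin 2) K}
    (htr : M.trace = 0) (hM : M ∉ Set.range (scalar (Fin 2))) :
    IsConj M !![0, 1; M.det, 0] := by
  have hd : M 1 1 = M 0 0 := by
    rw [trace_fin_two, CharTwo.add_eq_zero] at htr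
    exact htr.symm
  rcases eq_or_ne (M 1 0) 0 with hc | hc
  · have hb : M 0 1 ≠ 0 := by
      rintro hb
      refine hM ⟨M 0 0, ?_⟩
      rw [eta_fin_two M, hb, hc, hd]
      ext i j
      fin_cases i <;> fin_cases j <;> simp
    refine (isConj_swap M).trans ?_
    convert isConj_of_isUnit_apply_one_zero (M := !![M 1 1, M 1 0; M 0 1, M 0 0])
      (by simpa using hb.isUnit) using 3
    simp [det_fin_two, trace_fin_two, hd, hc, CharTwo.neg_eq, CharTwo.add_self_eq_zero]
  · simpa [htr, CharTwo.neg_eq] using isConj_of_isUnit_apply_one_zero hc.isUnit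

theorem mul_self_mem_range_scalar_and_not_mem_iff_isConj [CharP K 2]
    {M : Matrix (Fin 2) (Fin 2) K} (hM : IsUnit M) :
    (M * M ∈ Set.range (scalar (Fin 2)) ∧ M ∉ Set.range (scalar (Fin 2))) ↔
      ∃ p : K, p ≠ 0 ∧ IsConj M !![0, 1; p, 0] := by
  refine ⟨fun ⟨hsq, hns⟩ => ⟨M.det, ((isUnit_iff_isUnit_det M).mp hM).ne_zero,
    isConj_of_trace_eq_zero (trace_eq_zero_of_mul_self_mem_range_scalar hsq hns) hns⟩, ?_⟩
  rintro ⟨p, -, hconj⟩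
  have hL : (!![0, 1; p, 0] : Matrix (Fin 2) (Fin 2) K) ^ 2 = scalar (Fin 2) p := by
    ext i j
    fin_cases i <;> fin_cases j <;> simp [sq]
  refine ⟨⟨p, ?_⟩, fun hs => ?_⟩
  · rw [← sq, ← hL]
    exact ((hconj.pow 2).symm.eq_of_mem_center (by rw [center_eq_range, hL]; exact ⟨p, rfl⟩)).symm
  · obtain ⟨r, rfl⟩ := hs
    have h01 := congrFun₂ (hconj.eq_of_mem_center (by rw [center_eq_range]; exact ⟨r, rfl⟩)) 0 1
    simp at h01

end Field

end Matrix

/-- Let k be a field of characteristic 2 and A ∈ GL(2,k).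
Inn_A is a k-involution of SL(2,k) (Inn_A ∘ Inn_A = id on SL(2,k) but
Inn_A ≠ id on SL(2,k)) iff there exist nonzero p ∈ k and C ∈ GL(2,k)
with C·A·C⁻¹ = L_p = !![0,1;p,0]. -/
theorem stmt_2 {k : Type*} [Field k] [CharP k 2] (A : (Matrix (Fin 2) (Fin 2) k)ˣ) :
    ((∀ X : Matrix (Fin 2) (Fin 2) k, X.det = 1 →
        (A : Matrix (Fin 2) (Fin 2) k) *
          ((A : Matrix (Fin 2) (Fin 2) k) * X * (↑A⁻¹ : Matrix (Fin 2) (Fin 2) k)) *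
          (↑A⁻¹ : Matrix (Fin 2) (Fin 2) k) = X) ∧
      ¬ (∀ X : Matrix (Fin 2) (Fin 2) k, X.det = 1 →
        (A : Matrix (Fin 2) (Fin 2) k) * X * (↑A⁻¹ : Matrix (Fin 2) (Fin 2) k) = X)) ↔
    ∃ p : k, p ≠ 0 ∧ ∃ C : (Matrix (Fin 2) (Fin 2) k)ˣ,
      (C : Matrix (Fin 2) (Fin 2) k) * (A : Matrix (Fin 2) (Fin 2) k) *
        (↑C⁻¹ : Matrix (Fin 2) (Fin 2) k) = !![0, 1; p, 0] := by
  have hconj (u : (Matrix (Fin 2) (Fin 2) k)ˣ) (X : Matrix (Fin 2) (Fin 2) k) :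
      (u : Matrix (Fin 2) (Fin 2) k) * X * (↑u⁻¹ : Matrix (Fin 2) (Fin 2) k) = X ↔
        Commute (u : Matrix (Fin 2) (Fin 2) k) X :=
    Units.mul_inv_eq_iff_eq_mul u
  have hsq (X : Matrix (Fin 2) (Fin 2) k) :
      (A : Matrix (Fin 2) (Fin 2) k) * (A * X * (↑A⁻¹ : Matrix (Fin 2) (Fin 2) k)) *
          (↑A⁻¹ : Matrix (Fin 2) (Fin 2) k) =
        ((A * A : _ˣ) : Matrix (Fin 2) (Fin 2) k) * X * (↑(A * A)⁻¹ : Matrix (Fin 2) (Fin 2) k) := by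
    simp only [_root_.mul_inv_rev, Units.val_mul, mul_assoc]
  simp only [hsq, hconj]
  simp only [← Matrix.mem_range_scalar_iff_forall_det_eq_one_commute, Units.val_mul,
    Units.mul_inv_eq_iff_eq_mul]
  exact Matrix.mul_self_mem_range_scalar_and_not_mem_iff_isConj A.isUnit
end

section
/- Let k be a field of characteristic 2 and let r, s be nonzero elements of k. Let A = L_r and B = L_s, where L_p denotes the 2×2 matrix with rows (0,1) and (p,0). Then the k-involutions Inn_A and Inn_B of SL(2,k) are isomorphic (i.e., there exists C ∈ GL(2,k) with Inn_C ∘ Inn_A ∘ Inn_C⁻¹ = Inn_B on SL(2,k)) if and only if r/s is a square in k*, i.e., there exists a nonzero t ∈ k with r = t²·s. -/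
/-!
If conjugation by `N` and by `B` agree on `SL(n)`, then `B⁻¹ * N` commutes with every
transvection and is therefore scalar, so `N = c • B`. For `N = C * L_r * C⁻¹` taking determinants
gives `r = c² s`. Conversely, `diag(t, 1)` conjugates `L_{t² s}` to `t • L_s`, and conjugation by
a unit multiple of `B` is conjugation by `B`.
-/

namespace Matrix

variable {n R : Type*} [Fintype n] [DecidableEq n] [CommRing R]

theorem mem_range_scalar_of_forall_det_eq_one_commute {M : Matrix n n R}
    (hM : ∀ X : Matrix n n R, X.det = 1 → Commute X M) : M ∈ Set.range (scalar n) := by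
  refine mem_range_scalar_of_commute_single fun i j hij => ?_
  have h := (hM (transvection i j 1) (det_transvection_of_ne i j hij 1)).sub_left (.one_left M)
  rwa [transvection, add_sub_cancel_left] at h

theorem exists_eq_smul_of_forall_det_eq_one_conj_eq {N B : Matrix n n R} (hN : IsUnit N.det)
    (h : ∀ X : Matrix n n R, X.det = 1 → N * X * N⁻¹ = B * X * B⁻¹) : ∃ c : R, N = c • B := by
  -- `B` is not assumed invertible: the case `X = 1` shows it is.
  have hB : B * B⁻¹ = 1 := by simpa [mul_nonsing_inv N hN] using (h 1 det_one).symm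
  have hB' : B⁻¹ * B = 1 := mul_eq_one_comm.mp hB
  obtain ⟨c, hc⟩ := mem_range_scalar_of_forall_det_eq_one_commute (M := B⁻¹ * N) fun X hX =>
    calc X * (B⁻¹ * N) = B⁻¹ * (B * X * B⁻¹) * N := by simp only [← mul_assoc, hB', one_mul]
      _ = B⁻¹ * N * X := by rw [← h X hX]; simp only [mul_assoc, nonsing_inv_mul N hN, mul_one]
  refine ⟨c, ?_⟩
  rw [← one_mul N, ← hB, mul_assoc, ← hc, scalar_apply, ← smul_one_eq_diagonal, mul_smul_comm,
    mul_one]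

theorem smul_mul_mul_inv_smul {B : Matrix n n R} {t : R} (ht : IsUnit t) (hB : IsUnit B.det)
    (X : Matrix n n R) : t • B * X * (t • B)⁻¹ = B * X * B⁻¹ := by
  obtain ⟨u, rfl⟩ := ht
  have hinv := inv_smul' (A := B) u hB
  rw [Units.smul_def] at hinv
  rw [hinv, Units.smul_def, smul_mul_assoc, smul_mul_assoc, mul_smul_comm, smul_smul,
    Units.mul_inv, one_smul]

theorem units_conj_mul_conj (C : (Matrix n n R)ˣ) (A X : Matrix n n R) :
    C.val * (A * (C⁻¹.val * X * C.val) * A⁻¹) * C⁻¹.val =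
      C.val * A * C⁻¹.val * X * (C.val * A * C⁻¹.val)⁻¹ := by
  rw [Matrix.mul_inv_rev, Matrix.mul_inv_rev, coe_units_inv,
    nonsing_inv_nonsing_inv _ (isUnits_det_units C)]
  simp only [mul_assoc]

end Matrix

theorem stmt_4_general {k : Type*} [Field k] (r s : k) (hr : r ≠ 0) :
    (∃ C : (Matrix (Fin 2) (Fin 2) k)ˣ, ∀ X : Matrix (Fin 2) (Fin 2) k, X.det = 1 →
        (C : Matrix (Fin 2) (Fin 2) k) *
          (!![(0 : k), 1; r, 0] *
            ((↑C⁻¹ : Matrix (Fin 2) (Fin 2) k) * X * (C : Matrix (Fin 2) (Fin 2) k)) *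
            (!![(0 : k), 1; r, 0])⁻¹) *
          (↑C⁻¹ : Matrix (Fin 2) (Fin 2) k) =
        !![(0 : k), 1; s, 0] * X * (!![(0 : k), 1; s, 0])⁻¹) ↔
      ∃ t : k, t ≠ 0 ∧ r = t ^ 2 * s := by
  simp only [Matrix.units_conj_mul_conj]
  constructor
  · rintro ⟨C, hC⟩
    obtain ⟨c, hc⟩ := Matrix.exists_eq_smul_of_forall_det_eq_one_conj_eq
      (by rw [Matrix.det_units_conj]; simp [hr]) hC
    have hdet := congrArg Matrix.det hc
    simp only [Matrix.det_units_conj, Matrix.det_smul, Matrix.det_fin_two_of] at hdet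
    have hrs : r = c ^ 2 * s := by simpa using hdet
    exact ⟨c, by rintro rfl; simp [hrs] at hr, hrs⟩
  · rintro ⟨t, ht, rfl⟩
    let C : (Matrix (Fin 2) (Fin 2) k)ˣ :=
      ⟨!![t, 0; 0, 1], !![t⁻¹, 0; 0, 1], by simp [ht, Matrix.one_fin_two],
        by simp [ht, Matrix.one_fin_two]⟩
    have hCA : C.val * !![0, 1; t ^ 2 * s, 0] * C⁻¹.val = t • !![0, 1; s, 0] := by
      ext i j; fin_cases i <;> fin_cases j <;> simp [C, ht, sq, mul_assoc, mul_left_comm t]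
    refine ⟨C, fun X _ => ?_⟩
    rw [hCA, Matrix.smul_mul_mul_inv_smul ht.isUnit (by simpa using right_ne_zero_of_mul hr)]

/-- Let k be a field of characteristic 2 and r, s ∈ k nonzero.
With A = L_r = !![0,1;r,0] and B = L_s, the k-involutions Inn_A and Inn_B of
SL(2,k) are isomorphic (∃ C ∈ GL(2,k), Inn_C ∘ Inn_A ∘ Inn_C⁻¹ = Inn_B on
SL(2,k)) iff r/s is a square in k*, i.e. ∃ t ≠ 0 with r = t²·s. -/
theorem stmt_4 {k : Type*} [Field k] [CharP k 2] (r s : k) (hr : r ≠ 0) (hs : s ≠ 0) :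
    (∃ C : (Matrix (Fin 2) (Fin 2) k)ˣ, ∀ X : Matrix (Fin 2) (Fin 2) k, X.det = 1 →
        (C : Matrix (Fin 2) (Fin 2) k) *
          (!![(0 : k), 1; r, 0] *
            ((↑C⁻¹ : Matrix (Fin 2) (Fin 2) k) * X * (C : Matrix (Fin 2) (Fin 2) k)) *
            (!![(0 : k), 1; r, 0])⁻¹) *
          (↑C⁻¹ : Matrix (Fin 2) (Fin 2) k) =
        !![(0 : k), 1; s, 0] * X * (!![(0 : k), 1; s, 0])⁻¹) ↔
      ∃ t : k, t ≠ 0 ∧ r = t ^ 2 * s :=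
  stmt_4_general r s hr
end

section
/- Let k be a field of characteristic 2 in which every element is a square (for example, a finite field or an algebraically closed field of characteristic 2). If A, B ∈ GL(2,k) are such that Inn_A and Inn_B are both k-involutions of SL(2,k) (each squares to the identity on SL(2,k) and neither is the identity on SL(2,k)), then Inn_A and Inn_B are isomorphic: there exist C ∈ GL(2,k) and a nonzero p ∈ k with C·A·C⁻¹ = p·B. -/
/-!
Since `Inn_A ∘ Inn_A = Inn_{A²}` fixes every transvection, `A² = s` is scalar. Writing
`s = d²`, characteristic 2 gives `(A - d)² = A² - d² = 0`, and `A - d ≠ 0` because `Inn_A` is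
not the identity. A nonzero square-zero `2 × 2` matrix `N` is conjugate to `E₁₂`, via the basis
`(N v, v)` for any `v` with `N v ≠ 0`. Hence `A = d • U (1 + E₁₂) U⁻¹`, and likewise
`B = e • V (1 + E₁₂) V⁻¹`; then `C = V U⁻¹` and `p = d / e` work.
-/

namespace Matrix

section CommRing

variable {n R : Type*} [Fintype n] [DecidableEq n] [CommRing R]

theorem mul_self_mem_range_scalar_of_conj_involutive (A : (Matrix n n R)ˣ)
    (hA : ∀ X : Matrix n n R, X.det = 1 →
      (A : Matrix n n R) * ((A : Matrix n n R) * X * (↑A⁻¹ : Matrix n n R)) *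
        (↑A⁻¹ : Matrix n n R) = X) :
    (A : Matrix n n R) * A ∈ Set.range (scalar n) := by
  refine mem_range_scalar_of_commute_transvectionStruct fun t => ?_
  have h : ((A * A : (Matrix n n R)ˣ) : Matrix n n R) * t.toMatrix *
      (↑(A * A)⁻¹ : Matrix n n R) = t.toMatrix := by
    simpa only [Units.val_mul, _root_.mul_inv_rev, mul_assoc] using hA t.toMatrix t.det
  rw [Units.mul_inv_eq_iff_eq_mul, Units.val_mul] at h
  exact h.symm

theorem conj_eq_of_mem_range_scalar {A : (Matrix n n R)ˣ}
    (hA : (A : Matrix n n R) ∈ Set.range (scalar n)) (X : Matrix n n R) :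
    (A : Matrix n n R) * X * (↑A⁻¹ : Matrix n n R) = X := by
  obtain ⟨d, hd⟩ := hA
  rw [Units.mul_inv_eq_iff_eq_mul, ← hd, (scalar_commute d (Commute.all d) X).eq]

theorem sub_scalar_sq_eq_zero [Nonempty n] [CharP R 2] {A : Matrix n n R} {d : R}
    (hA : A * A = scalar n (d ^ 2)) : (A - scalar n d) ^ 2 = 0 := by
  rw [sub_pow_char_of_commute _ (scalar_commute d (Commute.all d) A).symm, sq, hA, map_pow,
    sub_self]

end CommRing

theorem exists_mulVec_ne_zero_of_ne_zero {m n α : Type*} [Fintype n] [NonAssocSemiring α]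
    {N : Matrix m n α} (hN : N ≠ 0) : ∃ v, N *ᵥ v ≠ 0 := by
  by_contra! h
  exact hN (mulVec_injective (funext fun v => by simp [h v]))

variable {K : Type*} [Field K]

theorem exists_conj_single_eq_of_sq_eq_zero {N : Matrix (Fin 2) (Fin 2) K}
    (hN2 : N ^ 2 = 0) (hN : N ≠ 0) :
    ∃ U : (Matrix (Fin 2) (Fin 2) K)ˣ, (U : Matrix (Fin 2) (Fin 2) K) * !![0, 1; 0, 0] *
      (↑U⁻¹ : Matrix (Fin 2) (Fin 2) K) = N := by
  obtain ⟨v, hv⟩ := exists_mulVec_ne_zero_of_ne_zero hN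
  have hNNv : N *ᵥ (N *ᵥ v) = 0 := by rw [mulVec_mulVec, ← sq, hN2, zero_mulVec]
  set C : Matrix (Fin 2) (Fin 2) K := (of ![N *ᵥ v, v])ᵀ
  have hC : IsUnit C := by
    refine linearIndependent_cols_iff_isUnit.mp (LinearIndependent.pair_iff.mpr fun s t hst => ?_)
    have ht : t • (N *ᵥ v) = 0 := by
      have h := congrArg (N *ᵥ ·) hst
      simpa only [mulVec_add, mulVec_smul, hNNv, smul_zero, zero_add, mulVec_zero] using h
    obtain rfl : t = 0 := (smul_eq_zero.mp ht).resolve_right hv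
    exact ⟨(smul_eq_zero.mp (by simpa using hst)).resolve_right hv, rfl⟩
  refine ⟨hC.unit, (Units.mul_inv_eq_iff_eq_mul _).2 ?_⟩
  ext i j
  fin_cases j
  · simpa [C, mul_apply, Fin.sum_univ_two, mulVec, dotProduct] using (congrFun hNNv i).symm
  · fin_cases i <;> simp [C, mul_apply, Fin.sum_univ_two]

theorem exists_eq_smul_conj_unipotent [CharP K 2] (hsq : ∀ x : K, ∃ y, y ^ 2 = x)
    (A : (Matrix (Fin 2) (Fin 2) K)ˣ)
    (hA2 : (A : Matrix (Fin 2) (Fin 2) K) * A ∈ Set.range (scalar _))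
    (hA1 : (A : Matrix (Fin 2) (Fin 2) K) ∉ Set.range (scalar _)) :
    ∃ d : K, d ≠ 0 ∧ ∃ U : (Matrix (Fin 2) (Fin 2) K)ˣ,
      (A : Matrix (Fin 2) (Fin 2) K) = d • ((U : Matrix (Fin 2) (Fin 2) K) * !![1, 1; 0, 1] *
        (↑U⁻¹ : Matrix (Fin 2) (Fin 2) K)) := by
  obtain ⟨s, hs⟩ := hA2
  obtain ⟨d, rfl⟩ := hsq s
  set N := (A : Matrix (Fin 2) (Fin 2) K) - scalar _ d with hN
  have hN2 : N ^ 2 = 0 := sub_scalar_sq_eq_zero hs.symm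
  have hN0 : N ≠ 0 := fun h => hA1 ⟨d, (sub_eq_zero.mp h).symm⟩
  have hd : d ≠ 0 := by
    rintro rfl
    refine (A ^ 2).ne_zero ?_
    simpa [hN] using hN2
  obtain ⟨U, hU⟩ := exists_conj_single_eq_of_sq_eq_zero (N := d⁻¹ • N)
    (by rw [smul_pow, hN2, smul_zero]) (smul_ne_zero (inv_ne_zero hd) hN0)
  refine ⟨d, hd, U, ?_⟩
  have hJ : !![(1 : K), 1; 0, 1] = 1 + !![0, 1; 0, 0] := by
    ext i j; fin_cases i <;> fin_cases j <;> simp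
  rw [hJ, mul_add, add_mul, mul_one, Units.mul_inv, hU, smul_add, smul_smul, mul_inv_cancel₀ hd,
    one_smul, hN]
  simp [smul_one_eq_diagonal]

end Matrix

open Matrix

/-- Let k be a field of characteristic 2 in which every element is
a square. If A, B ∈ GL(2,k) are such that Inn_A and Inn_B are both
k-involutions of SL(2,k), then Inn_A and Inn_B are isomorphic: there exist
C ∈ GL(2,k) and nonzero p ∈ k with C·A·C⁻¹ = p·B. -/
theorem stmt_5 {k : Type*} [Field k] [CharP k 2] (hsq : ∀ x : k, ∃ y : k, y ^ 2 = x)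
    (A B : (Matrix (Fin 2) (Fin 2) k)ˣ)
    (hA2 : ∀ X : Matrix (Fin 2) (Fin 2) k, X.det = 1 →
      (A : Matrix (Fin 2) (Fin 2) k) *
        ((A : Matrix (Fin 2) (Fin 2) k) * X * (↑A⁻¹ : Matrix (Fin 2) (Fin 2) k)) *
        (↑A⁻¹ : Matrix (Fin 2) (Fin 2) k) = X)
    (hA1 : ¬ (∀ X : Matrix (Fin 2) (Fin 2) k, X.det = 1 →
      (A : Matrix (Fin 2) (Fin 2) k) * X * (↑A⁻¹ : Matrix (Fin 2) (Fin 2) k) = X))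
    (hB2 : ∀ X : Matrix (Fin 2) (Fin 2) k, X.det = 1 →
      (B : Matrix (Fin 2) (Fin 2) k) *
        ((B : Matrix (Fin 2) (Fin 2) k) * X * (↑B⁻¹ : Matrix (Fin 2) (Fin 2) k)) *
        (↑B⁻¹ : Matrix (Fin 2) (Fin 2) k) = X)
    (hB1 : ¬ (∀ X : Matrix (Fin 2) (Fin 2) k, X.det = 1 →
      (B : Matrix (Fin 2) (Fin 2) k) * X * (↑B⁻¹ : Matrix (Fin 2) (Fin 2) k) = X)) :
    ∃ C : (Matrix (Fin 2) (Fin 2) k)ˣ, ∃ p : k, p ≠ 0 ∧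
      (C : Matrix (Fin 2) (Fin 2) k) * (A : Matrix (Fin 2) (Fin 2) k) *
        (↑C⁻¹ : Matrix (Fin 2) (Fin 2) k) = p • (B : Matrix (Fin 2) (Fin 2) k) := by
  obtain ⟨d, hd, U, hA⟩ := exists_eq_smul_conj_unipotent hsq A
    (mul_self_mem_range_scalar_of_conj_involutive A hA2)
    fun h => hA1 fun X _ => conj_eq_of_mem_range_scalar h X
  obtain ⟨e, he, V, hB⟩ := exists_eq_smul_conj_unipotent hsq B
    (mul_self_mem_range_scalar_of_conj_involutive B hB2)
    fun h => hB1 fun X _ => conj_eq_of_mem_range_scalar h X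
  refine ⟨V * U⁻¹, d / e, div_ne_zero hd he, ?_⟩
  rw [hA, hB, smul_smul, div_mul_cancel₀ d he]
  simp [mul_assoc]
end

section
/- Let k be a field of characteristic 2 and let p ∈ k be nonzero. The fixed-point group of the k-involution Inn_{L_p} of SL(2,k), namely H^p = {X ∈ SL(2,k) : L_p·X·L_p⁻¹ = X}, equals the set of 2×2 matrices with rows (a, b) and (p·b, a) where a, b ∈ k satisfy a² + p·b² = 1. -/
namespace Matrix

theorem conj_eq_self_iff_commute {n R : Type*} [Fintype n] [DecidableEq n] [CommRing R]
    {A X : Matrix n n R} (hA : IsUnit A.det) : A * X * A⁻¹ = X ↔ Commute A X := by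
  constructor
  · intro h
    change A * X = X * A
    conv_rhs => rw [← h]
    rw [nonsing_inv_mul_cancel_right _ _ hA]
  · intro h
    rw [h.eq, mul_nonsing_inv_cancel_right _ _ hA]

theorem commute_antidiag_iff {R : Type*} [CommRing R] (p : R) (X : Matrix (Fin 2) (Fin 2) R) :
    Commute !![0, 1; p, 0] X ↔ ∃ a b : R, X = !![a, b; p * b, a] := by
  constructor
  · intro h
    have h10 : X 1 0 = X 0 1 * p := by simpa [mul_apply] using congrFun₂ h.eq 0 0
    have h11 : X 1 1 = X 0 0 := by simpa [mul_apply] using congrFun₂ h.eq 0 1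
    exact ⟨X 0 0, X 0 1, by ext i j; fin_cases i <;> fin_cases j <;> simp [h10, h11, mul_comm]⟩
  · rintro ⟨a, b, rfl⟩
    change _ * _ = _ * _
    ext i j
    fin_cases i <;> fin_cases j <;> simp [mul_comm]

theorem det_fin_two_charTwo {k : Type*} [CommRing k] [CharP k 2] (a b p : k) :
    (!![a, b; p * b, a]).det = a ^ 2 + p * b ^ 2 := by
  rw [det_fin_two_of, CharTwo.sub_eq_add]
  ring

end Matrix

/-- Let k be a field of characteristic 2 and p ∈ k nonzero.
The fixed-point group H^p = {X ∈ SL(2,k) : L_p·X·L_p⁻¹ = X} of Inn_{L_p}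
equals the set of matrices !![a,b; p·b,a] with a² + p·b² = 1. -/
theorem stmt_7 {k : Type*} [Field k] [CharP k 2] (p : k) (hp : p ≠ 0) :
    {X : Matrix (Fin 2) (Fin 2) k | X.det = 1 ∧
        !![(0 : k), 1; p, 0] * X * (!![(0 : k), 1; p, 0])⁻¹ = X} =
      {X : Matrix (Fin 2) (Fin 2) k | ∃ a b : k,
        a ^ 2 + p * b ^ 2 = 1 ∧ X = !![a, b; p * b, a]} := by
  have hL : IsUnit (!![(0 : k), 1; p, 0]).det := by simpa [Matrix.det_fin_two_of] using hp
  ext X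
  simp only [Set.mem_ofPred_eq, Matrix.conj_eq_self_iff_commute hL,
    Matrix.commute_antidiag_iff]
  constructor
  · rintro ⟨hdet, a, b, rfl⟩
    exact ⟨a, b, by rwa [Matrix.det_fin_two_charTwo] at hdet, rfl⟩
  · rintro ⟨a, b, hab, rfl⟩
    exact ⟨by rwa [Matrix.det_fin_two_charTwo], a, b, rfl⟩
end

section
/- Let k be a field of characteristic 2 and let p ∈ k be nonzero. Every element Y of the fixed-point group H^p = {X ∈ SL(2,k) : L_p·X·L_p⁻¹ = X} is unipotent: its characteristic polynomial is (x+1)², so (Y − Id)² = 0; consequently Y is diagonalizable if and only if Y = Id. -/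
open Polynomial Matrix


/-- Let k be a field of characteristic 2 and p ∈ k nonzero.
Every Y in the fixed-point group H^p = {X ∈ SL(2,k) : L_p·X·L_p⁻¹ = X} is
unipotent: its characteristic polynomial is (x+1)², so (Y − Id)² = 0;
consequently Y is diagonalizable iff Y = Id. -/
theorem stmt_8 {k : Type*} [Field k] [CharP k 2] (p : k) (hp : p ≠ 0)
    (Y : Matrix (Fin 2) (Fin 2) k) (hdet : Y.det = 1)
    (hfix : !![(0 : k), 1; p, 0] * Y * (!![(0 : k), 1; p, 0])⁻¹ = Y) :
    Y.charpoly = (Polynomial.X + 1) ^ 2 ∧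
      (Y - 1) ^ 2 = 0 ∧
      ((∃ C : (Matrix (Fin 2) (Fin 2) k)ˣ, ∃ d : Fin 2 → k,
          (C : Matrix (Fin 2) (Fin 2) k) * Y * (↑C⁻¹ : Matrix (Fin 2) (Fin 2) k) =
            Matrix.diagonal d) ↔ Y = 1) := by
  have h2 : (2 : k) = 0 := CharP.cast_eq_zero k 2
  set L : Matrix (Fin 2) (Fin 2) k := !![(0 : k), 1; p, 0] with hL
  have hLdet : L.det = -p := by simp [hL, Matrix.det_fin_two_of]
  have hLu : IsUnit L.det := by simp [hLdet, hp, isUnit_iff_ne_zero]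
  have hcomm : L * Y = Y * L := by
    have := congrArg (· * L) hfix
    simpa [Matrix.mul_assoc, Matrix.nonsing_inv_mul L hLu] using this
  have h11 : Y 1 1 = Y 0 0 := by
    have := congrFun (congrFun hcomm 0) 1
    simpa [hL, Matrix.mul_apply, Fin.sum_univ_two] using this
  have hdet' : Y 0 0 * Y 1 1 - Y 0 1 * Y 1 0 = 1 := by
    rw [← Matrix.det_fin_two, hdet]
  have h2p : (2 : k[X]) = 0 := by
    exact_mod_cast CharP.cast_eq_zero k[X] 2
  have hcp : Y.charpoly = (Polynomial.X + 1) ^ 2 := by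
    rw [Matrix.charpoly, Matrix.det_fin_two, Matrix.charmatrix_apply_eq,
      Matrix.charmatrix_apply_eq, Matrix.charmatrix_apply_ne _ _ _ (by decide),
      Matrix.charmatrix_apply_ne _ _ _ (by decide)]
    have e1 : Y 0 0 + Y 1 1 = 0 := by
      rw [h11, ← two_mul, h2, zero_mul]
    have key : (Polynomial.X - Polynomial.C (Y 0 0)) * (Polynomial.X - Polynomial.C (Y 1 1)) -
        -Polynomial.C (Y 0 1) * -Polynomial.C (Y 1 0) =
        Polynomial.X ^ 2 - Polynomial.C (Y 0 0 + Y 1 1) * Polynomial.X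
          + Polynomial.C (Y 0 0 * Y 1 1 - Y 0 1 * Y 1 0) := by
      simp only [map_add, map_sub, Polynomial.C_mul]; ring
    rw [key, e1, hdet', Polynomial.C_0, Polynomial.C_1, zero_mul, sub_zero,
      show ((Polynomial.X + 1 : k[X]) ^ 2) = Polynomial.X ^ 2 + 2 * Polynomial.X + 1 by ring,
      h2p]
    ring
  have h2m : (2 : Matrix (Fin 2) (Fin 2) k) = 0 := by
    rw [show (2 : Matrix (Fin 2) (Fin 2) k) = 1 + 1 by norm_num]
    ext i j
    by_cases h : i = j <;>
      simp [Matrix.one_apply, h, show (1 : k) + 1 = 0 by rw [← h2]; norm_num]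
  have hsq : (Y - 1) ^ 2 = 0 := by
    have hce := Matrix.aeval_self_charpoly Y
    rw [hcp] at hce
    have hpe : (Y + 1) ^ 2 = 0 := by simpa using hce
    have e : (Y - 1) ^ 2 = (Y + 1) ^ 2 - 2 * (2 * Y) := by noncomm_ring
    rw [e, hpe, h2m]
    simp
  refine ⟨hcp, hsq, ?_, ?_⟩
  · rintro ⟨U, d, hUd⟩
    set V : Matrix (Fin 2) (Fin 2) k := (U : Matrix (Fin 2) (Fin 2) k) with hV
    set W : Matrix (Fin 2) (Fin 2) k := (↑U⁻¹ : Matrix (Fin 2) (Fin 2) k) with hW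
    have hVW : V * W = 1 := Units.mul_inv U
    have hWV : W * V = 1 := Units.inv_mul U
    have key : W * (V * Y * W) * V = Y := by
      simp only [Matrix.mul_assoc]
      rw [hWV, mul_one, ← Matrix.mul_assoc, hWV, one_mul]
    have hY : Y = W * Matrix.diagonal d * V := by
      rw [← key, hUd]
    have hconj : Matrix.diagonal d - 1 = V * (Y - 1) * W := by
      rw [Matrix.mul_sub, Matrix.sub_mul, hUd, mul_one, hVW]
    have hdsq : (Matrix.diagonal d - 1) ^ 2 = 0 := by
      rw [hconj, pow_two]
      have e : V * (Y - 1) * W * (V * (Y - 1) * W) = V * ((Y - 1) * (Y - 1)) * W := by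
        simp only [Matrix.mul_assoc]
        rw [← Matrix.mul_assoc W V, hWV, one_mul]
      rw [e, ← pow_two, hsq, mul_zero, zero_mul]
    have hdd : Matrix.diagonal (fun i => (d i - 1) ^ 2) = 0 := by
      have e : Matrix.diagonal d - 1 = Matrix.diagonal (fun i => d i - 1) := by
        rw [← Matrix.diagonal_one, Matrix.diagonal_sub]
      rw [e, pow_two, Matrix.diagonal_mul_diagonal] at hdsq
      rw [show (fun i => (d i - 1) ^ 2) = fun i => (d i - 1) * (d i - 1) from
        funext fun i => by ring]
      exact hdsq
    have hd1 : d = fun _ => (1 : k) := by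
      funext i
      have h0 := congrFun (congrFun hdd i) i
      rw [Matrix.diagonal_apply_eq, Matrix.zero_apply] at h0
      have h1 : d i - 1 = 0 := pow_eq_zero_iff two_ne_zero |>.mp h0
      linear_combination h1
    rw [hY, hd1, show Matrix.diagonal (fun _ => (1 : k)) = 1 from Matrix.diagonal_one,
      mul_one, hWV]
  · rintro rfl
    exact ⟨1, fun _ => 1, by simp⟩
end

section
/- Let k be a field of characteristic 2, n ≥ 2, and A ∈ GL(n,k). Suppose A² = c²·Id for some nonzero c ∈ k and A ≠ c·Id. Then there exist an integer m with 1 ≤ m ≤ n/2 and C ∈ GL(n,k) such that C·A·C⁻¹ = L_{m,c²,c}. -/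
/-- The n×n block-diagonal matrix L_{m,c²,c}: the first m diagonal 2×2 blocks
are !![0,1;c²,0] and the remaining n−2m diagonal entries equal c. -/
def Lmc {k : Type*} [Field k] (n m : ℕ) (c : k) : Matrix (Fin n) (Fin n) k :=
  Matrix.of fun i j =>
    if (i : ℕ) < 2 * m then
      if (i : ℕ) % 2 = 0 ∧ (j : ℕ) = (i : ℕ) + 1 then 1
      else if (i : ℕ) % 2 = 1 ∧ (j : ℕ) + 1 = (i : ℕ) then c ^ 2
      else 0
    else if j = i then c else 0

/-!
In characteristic 2 the endomorphism `N = A - c` of `V = kⁿ` satisfies `N² = A² - c² = 0`, so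
`range N ≤ ker N`. Choose a complement `W` of `ker N` and a complement `U` of `range N` inside
`ker N`; rank–nullity gives `dim V = 2 dim W + dim U`. For bases `wᵢ` of `W` and `uⱼ` of `U`
the vectors `A wᵢ, wᵢ, uⱼ` span `V` (since `N wᵢ = A wᵢ - c wᵢ` and `N(W) = range N`), hence
form a basis, and `A` sends `A wᵢ ↦ c² wᵢ`, `wᵢ ↦ A wᵢ`, `uⱼ ↦ c uⱼ`. Interleaving
the pairs `(A wᵢ, wᵢ)` turns the matrix of `A` into `L_{m,c²,c}`, and `m ≥ 1` because
`L_{0,c²,c} = c • 1`.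
-/

section

open Module Submodule LinearMap

variable {k V : Type*} [Field k] [AddCommGroup V] [Module k V]

lemma Module.End.range_sub_smul_le_ker_of_charTwo [CharP k 2] {f : Module.End k V} {c : k}
    (hf : ∀ x, f (f x) = c ^ 2 • x) : range (f - c • 1) ≤ ker (f - c • 1) := by
  rintro _ ⟨x, rfl⟩
  have h2 : (2 : k) = 0 := CharTwo.two_eq_zero
  simp only [mem_ker, LinearMap.sub_apply, LinearMap.smul_apply, Module.End.one_apply, map_sub,
    map_smul, hf]
  linear_combination (norm := module) h2 • (c ^ 2 • x - c • f x)

lemma Module.End.finrank_mul_two_add_finrank_eq_of_isCompl_ker [FiniteDimensional k V]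
    {N : Module.End k V} {W U : Submodule k V} (hW : IsCompl (ker N) W)
    (hRU : Disjoint (range N) U) (hRU_sup : range N ⊔ U = ker N) :
    finrank k W * 2 + finrank k U = finrank k V := by
  have hVW := finrank_add_eq_of_isCompl hW
  have hrank := N.finrank_range_add_finrank_ker
  have hker := finrank_sup_add_finrank_inf_eq (range N) U
  rw [hRU_sup, hRU.eq_bot, finrank_bot] at hker
  omega

lemma Module.End.top_le_span_of_range_sub_smul_sup_eq_ker {ι κ : Type*} {f : Module.End k V}
    {c : k} {W U : Submodule k V} (hW : IsCompl (ker (f - c • 1)) W)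
    (hRU_sup : range (f - c • 1) ⊔ U = ker (f - c • 1)) {w : ι → V} {u : κ → V}
    (hw : span k (Set.range w) = W) (hu : span k (Set.range u) = U) :
    ⊤ ≤ span k (Set.range (Sum.elim (fun p : ι × Fin 2 => ![f (w p.1), w p.1] p.2) u)) := by
  set S := span k (Set.range (Sum.elim (fun p : ι × Fin 2 => ![f (w p.1), w p.1] p.2) u))
  have hWS : W ≤ S := by
    rw [← hw, span_le]
    rintro _ ⟨i, rfl⟩
    exact subset_span ⟨.inl (i, 1), rfl⟩
  have hfWS : W.map f ≤ S := by
    rw [← hw, Submodule.map_span, span_le]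
    rintro _ ⟨_, ⟨i, rfl⟩, rfl⟩
    exact subset_span ⟨.inl (i, 0), rfl⟩
  have hUS : U ≤ S := by
    rw [← hu, span_le]
    rintro _ ⟨j, rfl⟩
    exact subset_span ⟨.inr j, rfl⟩
  have hRS : range (f - c • 1) ≤ S := by
    rintro _ ⟨x, rfl⟩
    obtain ⟨y, hy, z, hz, rfl⟩ :=
      mem_sup.mp (hW.symm.sup_eq_top ▸ mem_top : x ∈ W ⊔ ker (f - c • 1))
    rw [map_add, mem_ker.mp hz, add_zero]
    exact sub_mem (hfWS (mem_map_of_mem hy)) (smul_mem _ c (hWS hy))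
  rw [← hW.symm.sup_eq_top, ← hRU_sup]
  exact sup_le hWS (sup_le hRS hUS)

lemma Submodule.span_range_finBasis (W : Submodule k V) [FiniteDimensional k W] :
    span k (Set.range fun i => (finBasis k W i : V)) = W :=
  (span_range_subtype_eq_top_iff W fun i => (finBasis k W i).2).mp (finBasis k W).span_eq

theorem Module.End.exists_basis_of_apply_apply_eq_sq_smul [CharP k 2] [FiniteDimensional k V]
    {f : Module.End k V} {c : k} (hf : ∀ x, f (f x) = c ^ 2 • x) :
    ∃ (m r : ℕ) (v : Basis ((Fin m × Fin 2) ⊕ Fin r) k V),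
      (∀ i, f (v (.inl (i, 0))) = c ^ 2 • v (.inl (i, 1))) ∧
      (∀ i, f (v (.inl (i, 1))) = v (.inl (i, 0))) ∧
      ∀ j, f (v (.inr j)) = c • v (.inr j) := by
  set N := f - c • 1
  obtain ⟨W, hW⟩ := (ker N).exists_isCompl
  obtain ⟨U, hRU, hRU_sup⟩ := IsModularLattice.exists_disjoint_and_sup_eq
    (show range N ≤ ker N from range_sub_smul_le_ker_of_charTwo hf)
  have hspan := top_le_span_of_range_sub_smul_sup_eq_ker hW hRU_sup
    (span_range_finBasis W) (span_range_finBasis U)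
  have hcard : Fintype.card ((Fin (finrank k W) × Fin 2) ⊕ Fin (finrank k U)) = finrank k V := by
    simpa using finrank_mul_two_add_finrank_eq_of_isCompl_ker hW hRU hRU_sup
  refine ⟨_, _, basisOfTopLeSpanOfCardEqFinrank _ hspan hcard, fun i => ?_, fun i => ?_,
    fun j => ?_⟩
  · simp [hf]
  · simp
  · have : N (finBasis k U j) = 0 := mem_ker.mp (hRU_sup ▸ mem_sup_right (finBasis k U j).2)
    simpa [N, sub_eq_zero] using this

def finInterleave (m r : ℕ) : (Fin m × Fin 2) ⊕ Fin r ≃ Fin (m * 2 + r) :=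
  (finProdFinEquiv.sumCongr (Equiv.refl _)).trans finSumFinEquiv

lemma finInterleave_inl_val {m r : ℕ} (i : Fin m) (a : Fin 2) :
    (finInterleave m r (.inl (i, a)) : ℕ) = a + 2 * i := by
  simp [finInterleave]

lemma finInterleave_inr_val {m r : ℕ} (j : Fin r) :
    (finInterleave m r (.inr j) : ℕ) = m * 2 + j := by
  simp [finInterleave]

lemma toMatrix_reindex_finInterleave_eq_Lmc {m r : ℕ} {f : Module.End k V} {c : k}
    (v : Basis ((Fin m × Fin 2) ⊕ Fin r) k V)
    (h0 : ∀ i, f (v (.inl (i, 0))) = c ^ 2 • v (.inl (i, 1)))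
    (h1 : ∀ i, f (v (.inl (i, 1))) = v (.inl (i, 0)))
    (hr : ∀ j, f (v (.inr j)) = c • v (.inr j)) :
    toMatrix (v.reindex (finInterleave m r)) (v.reindex (finInterleave m r)) f =
      Lmc (m * 2 + r) m c := by
  ext i j
  obtain ⟨x, rfl⟩ := (finInterleave m r).surjective i
  obtain ⟨y, rfl⟩ := (finInterleave m r).surjective j
  rw [toMatrix_apply, Basis.reindex_apply, Basis.repr_reindex_apply, Equiv.symm_apply_apply,
    Equiv.symm_apply_apply]
  rcases x with ⟨i, a⟩ | i <;> rcases y with ⟨j, b⟩ | j <;> (try fin_cases a) <;>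
    (try fin_cases b) <;>
    simp [h0, h1, hr, Lmc, Finsupp.single_apply, Fin.ext_iff, finInterleave_inl_val,
      finInterleave_inr_val] <;>
    (try split_ifs) <;> first | rfl | omega

lemma Lmc_zero (n : ℕ) (c : k) : Lmc n 0 c = c • (1 : Matrix (Fin n) (Fin n) k) := by
  ext i j
  simp [Lmc, Matrix.one_apply, eq_comm]

lemma Matrix.exists_conj_eq_toMatrix_toLin' {ι : Type*} [Fintype ι] [DecidableEq ι]
    (A : Matrix ι ι k) (v : Basis ι k (ι → k)) :
    ∃ C : (Matrix ι ι k)ˣ, (C : Matrix ι ι k) * A * (↑C⁻¹ : Matrix ι ι k) =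
      toMatrix v v (toLin' A) := by
  refine ⟨⟨v.toMatrix (Pi.basisFun k ι), (Pi.basisFun k ι).toMatrix v,
    Basis.toMatrix_mul_toMatrix_flip _ _, Basis.toMatrix_mul_toMatrix_flip _ _⟩, ?_⟩
  have := basis_toMatrix_mul_linearMap_toMatrix_mul_basis_toMatrix v (Pi.basisFun k ι) v
    (Pi.basisFun k ι) (toLin' A)
  rwa [LinearMap.toMatrix_eq_toMatrix', LinearMap.toMatrix'_toLin'] at this

end

theorem stmt_10_general {k : Type*} [Field k] [CharP k 2] {n : ℕ}
    (A : (Matrix (Fin n) (Fin n) k)ˣ) (c : k)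
    (hA2 : (A : Matrix (Fin n) (Fin n) k) ^ 2 = c ^ 2 • (1 : Matrix (Fin n) (Fin n) k))
    (hA : (A : Matrix (Fin n) (Fin n) k) ≠ c • (1 : Matrix (Fin n) (Fin n) k)) :
    ∃ m : ℕ, 1 ≤ m ∧ 2 * m ≤ n ∧ ∃ C : (Matrix (Fin n) (Fin n) k)ˣ,
      (C : Matrix (Fin n) (Fin n) k) * (A : Matrix (Fin n) (Fin n) k) *
        (↑C⁻¹ : Matrix (Fin n) (Fin n) k) = Lmc n m c := by
  have hf : ∀ x, Matrix.toLin' (A : Matrix (Fin n) (Fin n) k) (Matrix.toLin' A x) = c ^ 2 • x := by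
    intro x
    simp [Matrix.mulVec_mulVec, ← sq, hA2, Matrix.smul_mulVec]
  obtain ⟨m, r, v, h0, h1, hr⟩ := Module.End.exists_basis_of_apply_apply_eq_sq_smul hf
  obtain rfl : m * 2 + r = n := by simpa using (Module.finrank_eq_card_basis v).symm
  obtain ⟨C, hC⟩ :=
    Matrix.exists_conj_eq_toMatrix_toLin' (A : Matrix _ _ k) (v.reindex (finInterleave m r))
  rw [toMatrix_reindex_finInterleave_eq_Lmc v h0 h1 hr] at hC
  refine ⟨m, Nat.one_le_iff_ne_zero.mpr ?_, by omega, C, hC⟩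
  rintro rfl
  rw [Lmc_zero] at hC
  apply hA
  refine (Units.mul_right_inj C).mp ?_
  rw [(Units.mul_inv_eq_iff_eq_mul C).mp hC, smul_mul_assoc, mul_smul_comm, one_mul, mul_one]

/-- Let k be a field of characteristic 2, n ≥ 2, A ∈ GL(n,k)
with A² = c²·Id for some nonzero c ∈ k and A ≠ c·Id. Then there exist
1 ≤ m ≤ n/2 and C ∈ GL(n,k) with C·A·C⁻¹ = L_{m,c²,c}. -/
theorem stmt_10 {k : Type*} [Field k] [CharP k 2] {n : ℕ} (hn : 2 ≤ n)
    (A : (Matrix (Fin n) (Fin n) k)ˣ) (c : k) (hc : c ≠ 0)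
    (hA2 : (A : Matrix (Fin n) (Fin n) k) ^ 2 = c ^ 2 • (1 : Matrix (Fin n) (Fin n) k))
    (hA : (A : Matrix (Fin n) (Fin n) k) ≠ c • (1 : Matrix (Fin n) (Fin n) k)) :
    ∃ m : ℕ, 1 ≤ m ∧ 2 * m ≤ n ∧ ∃ C : (Matrix (Fin n) (Fin n) k)ˣ,
      (C : Matrix (Fin n) (Fin n) k) * (A : Matrix (Fin n) (Fin n) k) *
        (↑C⁻¹ : Matrix (Fin n) (Fin n) k) = Lmc n m c :=
  stmt_10_general A c hA2 hA
end

section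
/- Let k be a field of characteristic 2, n ≥ 2, and A ∈ GL(n,k). Suppose A² = p·Id where p ∈ k is not a square in k. Then n is even and there exists C ∈ GL(n,k) such that C·A·C⁻¹ = L_{n/2,p}. -/
/-!
Since `p` is not a square, `X² - p` is irreducible, so `K = k[X]/(X² - p)` is a field, and
`kⁿ` becomes a `K`-vector space with `X` acting as `A`. For a `K`-basis `w₁, …, wₘ`, the vectors
`A w₁, w₁, …, A wₘ, wₘ` form a `k`-basis of `kⁿ` (so `n = 2m`), and in it `A` has matrix
`L_{m,p}` because `A (A wᵢ) = p wᵢ`.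
-/

/-- The n×n block-diagonal matrix L_{n/2,p} (for n even): n/2 diagonal 2×2
blocks, each equal to !![0,1;p,0]. -/
def Lhalf {k : Type*} [Field k] (n : ℕ) (p : k) : Matrix (Fin n) (Fin n) k :=
  Matrix.of fun i j =>
    if (i : ℕ) % 2 = 0 ∧ (j : ℕ) = (i : ℕ) + 1 then 1
    else if (i : ℕ) % 2 = 1 ∧ (j : ℕ) + 1 = (i : ℕ) then p
    else 0

open Polynomial Module Matrix
open scoped Kronecker

theorem irreducible_X_sq_sub_C {k : Type*} [Field k] {p : k} (hp : ¬∃ t : k, t ^ 2 = p) :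
    Irreducible (X ^ 2 - C p) :=
  X_pow_sub_C_irreducible_of_prime Nat.prime_two fun t ht => hp ⟨t, ht⟩

-- Unlike `AdjoinRoot.liftAlgHom`, this allows a noncommutative target such as `Module.End k V`.
theorem AdjoinRoot.exists_algHom_root_eq {R A : Type*} [CommRing R] [Ring A] [Algebra R A]
    {q : R[X]} {a : A} (h : aeval a q = 0) : ∃ φ : AdjoinRoot q →ₐ[R] A, φ (root q) = a := by
  have hker (g : R[X]) (hg : g ∈ Ideal.span {q}) : aeval a g = 0 := by
    obtain ⟨c, rfl⟩ := Ideal.mem_span_singleton'.mp hg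
    rw [map_mul, h, mul_zero]
  refine ⟨Ideal.Quotient.liftₐ _ (aeval a) hker, ?_⟩
  have hcomp := AlgHom.congr_fun (Ideal.Quotient.liftₐ_comp (Ideal.span {q}) (aeval a) hker) X
  rwa [aeval_X] at hcomp

theorem AdjoinRoot.exists_basis_X_sq_sub_C {k : Type*} [Field k] (p : k) :
    ∃ c : Basis (Fin 2) k (AdjoinRoot (X ^ 2 - C p)), c 0 = root _ ∧ c 1 = 1 := by
  let pb := powerBasis' (monic_X_pow_sub_C p two_ne_zero)
  refine ⟨pb.basis.reindex ((finCongr (by simp [pb])).trans Fin.revPerm), ?_, ?_⟩ <;>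
    simp [pb]

theorem Module.End.exists_basis_fin_two_of_sq_eq_algebraMap {k V : Type*} [Field k]
    [AddCommGroup V] [Module k V] [FiniteDimensional k V] {f : Module.End k V} {p : k}
    (hp : ¬∃ t : k, t ^ 2 = p) (hf : f ^ 2 = algebraMap k _ p) :
    ∃ (m : ℕ) (b : Basis (Fin m × Fin 2) k V), ∀ i, b (i, 0) = f (b (i, 1)) := by
  have : Fact (Irreducible (X ^ 2 - C p)) := ⟨irreducible_X_sq_sub_C hp⟩
  obtain ⟨φ, hφ⟩ := AdjoinRoot.exists_algHom_root_eq (q := X ^ 2 - C p) (a := f) (by simp [hf])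
  let : Module (AdjoinRoot (X ^ 2 - C p)) V := Module.compHom V φ.toRingHom
  have : IsScalarTower k (AdjoinRoot (X ^ 2 - C p)) V :=
    ⟨fun a s v => show φ (a • s) v = a • φ s v by rw [map_smul]; rfl⟩
  have : FiniteDimensional (AdjoinRoot (X ^ 2 - C p)) V := .right k _ V
  obtain ⟨c, hc0, hc1⟩ := AdjoinRoot.exists_basis_X_sq_sub_C p
  refine ⟨_, c.smulTower' (Module.finBasis _ V), fun i => ?_⟩
  rw [Basis.smulTower'_apply, Basis.smulTower'_apply, hc0, hc1, one_smul]
  exact LinearMap.congr_fun hφ _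

theorem Module.End.toMatrix_eq_one_kronecker {k V ι : Type*} [Field k] [AddCommGroup V]
    [Module k V] [Fintype ι] [DecidableEq ι] {f : Module.End k V} {p : k}
    (hf : f ^ 2 = algebraMap k _ p) (b : Basis (ι × Fin 2) k V)
    (hb : ∀ i, b (i, 0) = f (b (i, 1))) :
    LinearMap.toMatrix b b f = (1 : Matrix ι ι k) ⊗ₖ !![0, 1; p, 0] := by
  have hb0 (i : ι) : f (b (i, 0)) = p • b (i, 1) := by
    rw [hb, ← Module.End.mul_apply, ← sq, hf, Module.algebraMap_end_apply]
  ext ⟨i, a⟩ ⟨j, c⟩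
  rw [LinearMap.toMatrix_apply, kroneckerMap_apply, Matrix.one_apply]
  fin_cases a <;> fin_cases c <;> simp [hb0, ← hb, Finsupp.single_apply, eq_comm]

theorem LinearMap.toMatrix_basis_reindex {R M N ι ι' κ κ' : Type*} [CommRing R]
    [AddCommGroup M] [Module R M] [AddCommGroup N] [Module R N]
    [Fintype ι] [Fintype ι'] [Fintype κ] [Fintype κ'] [DecidableEq ι] [DecidableEq ι']
    (b : Basis ι R M) (c : Basis κ R N) (e : ι ≃ ι') (e' : κ ≃ κ') (f : M →ₗ[R] N) :
    LinearMap.toMatrix (b.reindex e) (c.reindex e') f =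
      reindex e' e (LinearMap.toMatrix b c f) := by
  ext i j
  simp [LinearMap.toMatrix_apply]

theorem reindex_one_kronecker_eq_Lhalf {k : Type*} [Field k] {m n : ℕ} (h : m * 2 = n) (p : k) :
    reindex (finProdFinEquiv.trans (finCongr h)) (finProdFinEquiv.trans (finCongr h))
      ((1 : Matrix (Fin m) (Fin m) k) ⊗ₖ !![0, 1; p, 0]) = Lhalf n p := by
  subst h
  ext i j
  obtain ⟨⟨i, a⟩, rfl⟩ := finProdFinEquiv.surjective i
  obtain ⟨⟨j, c⟩, rfl⟩ := finProdFinEquiv.surjective j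
  simp only [reindex_apply, submatrix_apply, Equiv.symm_trans_apply, finCongr_symm, finCongr_apply,
    Fin.cast_eq_self, Equiv.symm_apply_apply, kroneckerMap_apply, one_apply, Lhalf, of_apply,
    Fin.ext_iff]
  fin_cases a <;> fin_cases c <;> simp <;> grind

theorem Matrix.exists_units_conj_eq_toMatrix_toLin' {R ι : Type*} [CommRing R] [Fintype ι]
    [DecidableEq ι] (A : Matrix ι ι R) (b : Basis ι R (ι → R)) :
    ∃ C : (Matrix ι ι R)ˣ, C * A * C⁻¹ = LinearMap.toMatrix b b (toLin' A) := by
  let std := Pi.basisFun R ι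
  refine ⟨⟨b.toMatrix std, std.toMatrix b, b.toMatrix_mul_toMatrix_flip std,
    std.toMatrix_mul_toMatrix_flip b⟩, ?_⟩
  rw [← basis_toMatrix_mul_linearMap_toMatrix_mul_basis_toMatrix b std b std,
    LinearMap.toMatrix_eq_toMatrix', LinearMap.toMatrix'_toLin']
  rfl

theorem stmt_11_general {k : Type*} [Field k] {n : ℕ}
    (A : (Matrix (Fin n) (Fin n) k)ˣ) (p : k) (hp : ¬ ∃ t : k, t ^ 2 = p)
    (hA2 : (A : Matrix (Fin n) (Fin n) k) ^ 2 = p • (1 : Matrix (Fin n) (Fin n) k)) :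
    Even n ∧ ∃ C : (Matrix (Fin n) (Fin n) k)ˣ,
      (C : Matrix (Fin n) (Fin n) k) * (A : Matrix (Fin n) (Fin n) k) *
        (↑C⁻¹ : Matrix (Fin n) (Fin n) k) = Lhalf n p := by
  have hf : toLin' (A : Matrix (Fin n) (Fin n) k) ^ 2 = algebraMap k _ p := by
    rw [← toLin'_pow, hA2, ← Algebra.algebraMap_eq_smul_one]
    exact toLinAlgEquiv'.commutes p
  obtain ⟨m, b, hb⟩ := Module.End.exists_basis_fin_two_of_sq_eq_algebraMap hp hf
  have hmn : m * 2 = n := by simpa using (finrank_eq_card_basis b).symm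
  refine ⟨⟨m, by omega⟩, ?_⟩
  let e := finProdFinEquiv.trans (finCongr hmn)
  obtain ⟨C, hC⟩ := exists_units_conj_eq_toMatrix_toLin' (A : Matrix (Fin n) (Fin n) k)
    (b.reindex e)
  refine ⟨C, ?_⟩
  rw [hC, LinearMap.toMatrix_basis_reindex, Module.End.toMatrix_eq_one_kronecker hf b hb,
    reindex_one_kronecker_eq_Lhalf]

/-- Let k be a field of characteristic 2, n ≥ 2, A ∈ GL(n,k)
with A² = p·Id where p is not a square in k. Then n is even and there exists
C ∈ GL(n,k) with C·A·C⁻¹ = L_{n/2,p}. -/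
theorem stmt_11 {k : Type*} [Field k] [CharP k 2] {n : ℕ} (hn : 2 ≤ n)
    (A : (Matrix (Fin n) (Fin n) k)ˣ) (p : k) (hp : ¬ ∃ t : k, t ^ 2 = p)
    (hA2 : (A : Matrix (Fin n) (Fin n) k) ^ 2 = p • (1 : Matrix (Fin n) (Fin n) k)) :
    Even n ∧ ∃ C : (Matrix (Fin n) (Fin n) k)ˣ,
      (C : Matrix (Fin n) (Fin n) k) * (A : Matrix (Fin n) (Fin n) k) *
        (↑C⁻¹ : Matrix (Fin n) (Fin n) k) = Lhalf n p :=
  stmt_11_general A p hp hA2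
end

section
/- Let k be a field of characteristic 2, let n be even with n ≥ 2, and let p, q ∈ k be nonzero non-squares. Then Inn_{L_{n/2,p}} is isomorphic to Inn_{L_{n/2,q}} (i.e., there exists C ∈ GL(n,k) with Inn_C ∘ Inn_{L_{n/2,p}} ∘ Inn_C⁻¹ = Inn_{L_{n/2,q}} on SL(n,k)) if and only if p/q is a square in k*, i.e., there exists a nonzero t ∈ k with p = t²·q. -/
open Matrix

section ConjugationOnSL

variable {n R : Type*} [Fintype n] [DecidableEq n] [CommRing R]

theorem Matrix.mem_range_scalar_of_forall_det_eq_one_commute_s13 {M : Matrix n n R}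
    (hM : ∀ X : Matrix n n R, X.det = 1 → Commute M X) : M ∈ Set.range (scalar n) :=
  mem_range_scalar_of_commute_single fun i j hij => by
    have h := (hM (transvection i j 1) (det_transvection_of_ne i j hij 1)).symm
    simpa only [Commute, SemiconjBy, transvection, add_mul, mul_add, one_mul, mul_one,
      add_right_inj] using h

theorem Matrix.exists_eq_smul_of_forall_det_eq_one_conj_eq_s13 {A B : Matrix n n R}
    (hA : IsUnit A.det) (hB : IsUnit B.det)
    (h : ∀ X : Matrix n n R, X.det = 1 → A * X * A⁻¹ = B * X * B⁻¹) :
    ∃ c : R, A = c • B := by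
  obtain ⟨c, hc⟩ := mem_range_scalar_of_forall_det_eq_one_commute_s13 (M := B⁻¹ * A) fun X hX =>
    calc B⁻¹ * A * X = B⁻¹ * (A * X * A⁻¹) * A := by
          simp only [mul_assoc, nonsing_inv_mul _ hA, mul_one]
      _ = X * (B⁻¹ * A) := by
          simp only [h X hX, ← mul_assoc, nonsing_inv_mul _ hB, one_mul]
  refine ⟨c, ?_⟩
  calc A = B * (B⁻¹ * A) := by rw [← mul_assoc, mul_nonsing_inv _ hB, one_mul]
    _ = c • B := by rw [← hc, scalar_apply, ← smul_one_eq_diagonal, Matrix.mul_smul, mul_one]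

theorem Matrix.conj_units_conj (C : (Matrix n n R)ˣ) (L X : Matrix n n R) :
    (C : Matrix n n R) * (L * ((↑C⁻¹ : Matrix n n R) * X * C) * L⁻¹) * (↑C⁻¹ : Matrix n n R) =
      (C * L * (↑C⁻¹ : Matrix n n R)) * X * (C * L * (↑C⁻¹ : Matrix n n R))⁻¹ := by
  have hC : IsUnit (C : Matrix n n R).det := (isUnit_iff_isUnit_det _).mp C.isUnit
  simp only [mul_inv_rev, coe_units_inv, nonsing_inv_nonsing_inv _ hC, mul_assoc]

theorem Matrix.conj_smul_eq_conj {K : Type*} [Field K] {L : Matrix n n K} (hL : IsUnit L.det)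
    {t : K} (ht : t ≠ 0) (X : Matrix n n K) : (t • L) * X * (t • L)⁻¹ = L * X * L⁻¹ := by
  have hinv : (t • L)⁻¹ = t⁻¹ • L⁻¹ := inv_eq_right_inv <| by
    rw [smul_mul_smul, mul_nonsing_inv _ hL, mul_inv_cancel₀ ht, one_smul]
  simp only [hinv, Matrix.mul_smul, Matrix.smul_mul, smul_smul, inv_mul_cancel₀ ht, one_smul]

end ConjugationOnSL

section Lhalf

variable {k : Type*} [Field k] {n : ℕ}

theorem Lhalf_mul_self (hn : Even n) (p : k) : Lhalf n p * Lhalf n p = p • 1 := by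
  obtain ⟨m, rfl⟩ := hn
  ext i j
  obtain ⟨i', hi'⟩ : ∃ i' : Fin (m + m),
      (i' : ℕ) = if (i : ℕ) % 2 = 0 then (i : ℕ) + 1 else (i : ℕ) - 1 := by
    split_ifs <;> exact ⟨⟨_, by omega⟩, rfl⟩
  rw [mul_apply, Finset.sum_eq_single i']
  · simp only [Lhalf, of_apply, Matrix.smul_apply, one_apply, Fin.ext_iff, smul_eq_mul]
    split_ifs at hi' ⊢ <;> first | omega | simp
  · intro l _ hl
    simp only [Lhalf, of_apply]
    split_ifs at hi' ⊢ <;> first | omega | simp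
  · simp

theorem isUnit_det_Lhalf (hn : Even n) {p : k} (hp : p ≠ 0) : IsUnit (Lhalf n p).det :=
  isUnit_det_of_right_inverse (B := p⁻¹ • Lhalf n p) <| by
    rw [Matrix.mul_smul, Lhalf_mul_self hn, smul_smul, inv_mul_cancel₀ hp, one_smul]

theorem diagonal_mul_Lhalf (t q : k) :
    diagonal (fun i : Fin n => if (i : ℕ) % 2 = 0 then t else 1) * Lhalf n (t ^ 2 * q) =
      t • Lhalf n q * diagonal (fun i : Fin n => if (i : ℕ) % 2 = 0 then t else 1) := by
  ext i j
  simp only [diagonal_mul, mul_diagonal, Lhalf, of_apply, Matrix.smul_apply, smul_eq_mul]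
  split_ifs <;> first | omega | ring

theorem exists_units_conj_Lhalf_eq_smul {t : k} (ht : t ≠ 0) (q : k) :
    ∃ C : (Matrix (Fin n) (Fin n) k)ˣ,
      C * Lhalf n (t ^ 2 * q) * (↑C⁻¹ : Matrix (Fin n) (Fin n) k) = t • Lhalf n q := by
  set D := diagonal (fun i : Fin n => if (i : ℕ) % 2 = 0 then t else 1)
  have hD : IsUnit D.det := by
    rw [det_diagonal, isUnit_iff_ne_zero, Finset.prod_ne_zero_iff]
    intro i _
    split_ifs
    exacts [ht, one_ne_zero]
  refine ⟨((isUnit_iff_isUnit_det D).mpr hD).unit, ?_⟩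
  rw [coe_units_inv, IsUnit.unit_spec, diagonal_mul_Lhalf, mul_assoc, mul_nonsing_inv _ hD,
    mul_one]

end Lhalf

theorem stmt_13_general {k : Type*} [Field k] {n : ℕ} (hn : 2 ≤ n)
    (hne : Even n) (p q : k) (hp0 : p ≠ 0) (hq0 : q ≠ 0) :
    (∃ C : (Matrix (Fin n) (Fin n) k)ˣ, ∀ X : Matrix (Fin n) (Fin n) k, X.det = 1 →
        (C : Matrix (Fin n) (Fin n) k) *
          (Lhalf n p *
            ((↑C⁻¹ : Matrix (Fin n) (Fin n) k) * X * (C : Matrix (Fin n) (Fin n) k)) *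
            (Lhalf n p)⁻¹) *
          (↑C⁻¹ : Matrix (Fin n) (Fin n) k) =
        Lhalf n q * X * (Lhalf n q)⁻¹) ↔
      ∃ t : k, t ≠ 0 ∧ p = t ^ 2 * q := by
  simp_rw [conj_units_conj]
  constructor
  · rintro ⟨C, hC⟩
    set A : Matrix (Fin n) (Fin n) k := C * Lhalf n p * (↑C⁻¹ : Matrix (Fin n) (Fin n) k)
    have hA : IsUnit A.det := by rw [det_units_conj]; exact isUnit_det_Lhalf hne hp0
    obtain ⟨c, hc⟩ := exists_eq_smul_of_forall_det_eq_one_conj_eq_s13 hA (isUnit_det_Lhalf hne hq0) hC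
    have hsq : p • (1 : Matrix (Fin n) (Fin n) k) = (c ^ 2 * q) • 1 := by
      calc p • 1 = C * (Lhalf n p * Lhalf n p) * (↑C⁻¹ : Matrix (Fin n) (Fin n) k) := by
            rw [Lhalf_mul_self hne, Matrix.mul_smul, Matrix.smul_mul, mul_one, Units.mul_inv]
        _ = A * A := by simp only [A, mul_assoc, Units.inv_mul_cancel_left]
        _ = (c ^ 2 * q) • 1 := by
          rw [hc, smul_mul_smul, Lhalf_mul_self hne, smul_smul, sq]
    have : NeZero n := ⟨by omega⟩
    have hp : p = c ^ 2 * q := smul_left_injective k one_ne_zero hsq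
    exact ⟨c, by rintro rfl; simp [hp0] at hp, hp⟩
  · rintro ⟨t, ht0, rfl⟩
    obtain ⟨C, hC⟩ := exists_units_conj_Lhalf_eq_smul (n := n) ht0 q
    exact ⟨C, fun X _ => by rw [hC, conj_smul_eq_conj (isUnit_det_Lhalf hne hq0) ht0]⟩

/-- Let k be a field of characteristic 2, n even with n ≥ 2,
and p, q ∈ k nonzero non-squares. Then Inn_{L_{n/2,p}} is isomorphic to
Inn_{L_{n/2,q}} (∃ C ∈ GL(n,k) with Inn_C ∘ Inn_{L_{n/2,p}} ∘ Inn_C⁻¹ =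
Inn_{L_{n/2,q}} on SL(n,k)) iff p/q is a square in k*, i.e. ∃ t ≠ 0 with
p = t²·q. -/
theorem stmt_13 {k : Type*} [Field k] [CharP k 2] {n : ℕ} (hn : 2 ≤ n)
    (hne : Even n) (p q : k) (hp0 : p ≠ 0) (hq0 : q ≠ 0)
    (hp : ¬ ∃ t : k, t ^ 2 = p) (hq : ¬ ∃ t : k, t ^ 2 = q) :
    (∃ C : (Matrix (Fin n) (Fin n) k)ˣ, ∀ X : Matrix (Fin n) (Fin n) k, X.det = 1 →
        (C : Matrix (Fin n) (Fin n) k) *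
          (Lhalf n p *
            ((↑C⁻¹ : Matrix (Fin n) (Fin n) k) * X * (C : Matrix (Fin n) (Fin n) k)) *
            (Lhalf n p)⁻¹) *
          (↑C⁻¹ : Matrix (Fin n) (Fin n) k) =
        Lhalf n q * X * (Lhalf n q)⁻¹) ↔
      ∃ t : k, t ≠ 0 ∧ p = t ^ 2 * q :=
  stmt_13_general hn hne p q hp0 hq0
end

section
/- Let k be a field of characteristic 2, n ≥ 2, let b, c ∈ k be nonzero, and let m be an integer with 1 ≤ m ≤ n/2. Then Inn_{L_{m,b²,b}} is isomorphic to Inn_{L_{m,c²,c}}: there exist C ∈ GL(n,k) and a nonzero t ∈ k (namely t = b/c) with C·L_{m,b²,b}·C⁻¹ = t·L_{m,c²,c}. -/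
open Matrix

def diagonalUnit {ι K : Type*} [Fintype ι] [DecidableEq ι] [Field K] (d : ι → K)
    (hd : ∀ i, d i ≠ 0) : (Matrix ι ι K)ˣ where
  val := diagonal d
  inv := diagonal d⁻¹
  val_inv := by
    rw [diagonal_mul_diagonal, ← diagonal_one]
    congr! with i
    exact mul_inv_cancel₀ (hd i)
  inv_val := by
    rw [diagonal_mul_diagonal, ← diagonal_one]
    congr! with i
    exact inv_mul_cancel₀ (hd i)

section

variable {k : Type*} [Field k] {n m : ℕ} {b c : k}

def lmcScaling (n m : ℕ) (b c : k) (i : Fin n) : k :=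
  if (i : ℕ) < 2 * m then (if (i : ℕ) % 2 = 0 then b else c) else 1

lemma lmcScaling_ne_zero (hb : b ≠ 0) (hc : c ≠ 0) (i : Fin n) : lmcScaling n m b c i ≠ 0 := by
  unfold lmcScaling
  split_ifs <;> simp [*]

lemma diagonal_lmcScaling_mul_Lmc_mul_diagonal_inv (hb : b ≠ 0) (hc : c ≠ 0) :
    diagonal (lmcScaling n m b c) * Lmc n m b * diagonal (lmcScaling n m b c)⁻¹ =
      (b / c) • Lmc n m c := by
  ext i j
  simp only [mul_diagonal, diagonal_mul, Matrix.smul_apply, smul_eq_mul, Lmc, of_apply,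
    lmcScaling, Pi.inv_apply]
  split_ifs <;> first | omega | (simp_all; done) | field_simp

end

theorem stmt_14_general {k : Type*} [Field k] {n : ℕ}
    (b c : k) (hb : b ≠ 0) (hc : c ≠ 0) (m : ℕ) :
    ∃ C : (Matrix (Fin n) (Fin n) k)ˣ, ∃ t : k, t ≠ 0 ∧
      (C : Matrix (Fin n) (Fin n) k) * Lmc n m b *
        (↑C⁻¹ : Matrix (Fin n) (Fin n) k) = t • Lmc n m c :=
  ⟨diagonalUnit _ (lmcScaling_ne_zero hb hc), b / c, div_ne_zero hb hc,
    diagonal_lmcScaling_mul_Lmc_mul_diagonal_inv hb hc⟩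

/-- Let k be a field of characteristic 2, n ≥ 2, b, c ∈ k
nonzero, and 1 ≤ m ≤ n/2. Then Inn_{L_{m,b²,b}} is isomorphic to
Inn_{L_{m,c²,c}}: there exist C ∈ GL(n,k) and nonzero t ∈ k (namely t = b/c)
with C·L_{m,b²,b}·C⁻¹ = t·L_{m,c²,c}. -/
theorem stmt_14 {k : Type*} [Field k] [CharP k 2] {n : ℕ} (hn : 2 ≤ n)
    (b c : k) (hb : b ≠ 0) (hc : c ≠ 0) (m : ℕ) (hm1 : 1 ≤ m) (hm2 : 2 * m ≤ n) :
    ∃ C : (Matrix (Fin n) (Fin n) k)ˣ, ∃ t : k, t ≠ 0 ∧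
      (C : Matrix (Fin n) (Fin n) k) * Lmc n m b *
        (↑C⁻¹ : Matrix (Fin n) (Fin n) k) = t • Lmc n m c :=
  stmt_14_general b c hb hc m
end

section
/- Let k be a field of characteristic 2, n ≥ 2, let c ∈ k be nonzero, and let m₁, m₂ be integers with 1 ≤ m₁ < m₂ ≤ n/2. Then L_{m₁,c²,c} is not conjugate to L_{m₂,c²,c}: there is no C ∈ GL(n,k) with C·L_{m₁,c²,c}·C⁻¹ = L_{m₂,c²,c}. Moreover, for even n and p ∈ k not a square in k, L_{m,c²,c} is not conjugate to L_{n/2,p} for any m with 1 ≤ m ≤ n/2. -/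
theorem Units.conj_smul_one {R A : Type*} [CommSemiring R] [Semiring A] [Algebra R A]
    (u : Aˣ) (a : R) : (u : A) * (a • 1) * ↑u⁻¹ = a • 1 := by
  rw [mul_smul_comm, mul_one, smul_mul_assoc, Units.mul_inv]

theorem Units.conj_sub_smul_one {R A : Type*} [CommSemiring R] [Ring A] [Algebra R A]
    (u : Aˣ) (x : A) (a : R) : (u : A) * (x - a • 1) * ↑u⁻¹ = (u : A) * x * ↑u⁻¹ - a • 1 := by
  rw [mul_sub, sub_mul, Units.conj_smul_one]

theorem Matrix.rank_units_conj {n R : Type*} [Fintype n] [DecidableEq n] [CommRing R]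
    (C : (Matrix n n R)ˣ) (A : Matrix n n R) :
    ((C : Matrix n n R) * A * (↑C⁻¹ : Matrix n n R)).rank = A.rank := by
  rw [rank_mul_eq_left_of_isUnit_det _ _ ((isUnit_iff_isUnit_det _).mp C⁻¹.isUnit),
    rank_mul_eq_right_of_isUnit_det _ _ ((isUnit_iff_isUnit_det _).mp C.isUnit)]

theorem Matrix.mul_apply_of_row_support_subsingleton {l m o α : Type*} [Fintype m]
    [NonUnitalNonAssocSemiring α] {A : Matrix l m α} (B : Matrix m o α) {i : l} (j₀ : m)
    (h : ∀ j, j ≠ j₀ → A i j = 0) (r : o) : (A * B) i r = A i j₀ * B j₀ r := by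
  rw [mul_apply, Fintype.sum_eq_single j₀ fun j hj => by rw [h j hj, zero_mul]]

section

variable {k : Type*} [Field k] {n m : ℕ}

/- In characteristic 2 each block `!![c, 1; c², c]` of `L_{m,c²,c} - c • 1` is the product of the
column `(1, c)` and the row `(c, 1)`; `pairCol` and `pairRow` collect these. -/
def pairCol (n m : ℕ) (c : k) : Matrix (Fin n) (Fin m) k :=
  Matrix.of fun r i => if (r : ℕ) = 2 * i then 1 else if (r : ℕ) = 2 * i + 1 then c else 0

def pairRow (n m : ℕ) (c : k) : Matrix (Fin m) (Fin n) k :=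
  Matrix.of fun i s => if (s : ℕ) = 2 * i then c else if (s : ℕ) = 2 * i + 1 then 1 else 0

theorem Lmc_sub_smul_one_eq_mul [CharP k 2] (c : k) :
    Lmc n m c - c • 1 = pairCol n m c * pairRow n m c := by
  ext i j
  by_cases hi : (i : ℕ) < 2 * m
  · rw [Matrix.mul_apply_of_row_support_subsingleton _ (⟨i / 2, by omega⟩ : Fin m)]
    · simp only [pairCol, pairRow, Lmc, Matrix.of_apply, Matrix.sub_apply, Matrix.smul_apply,
        Matrix.one_apply, smul_eq_mul, Fin.ext_iff, CharTwo.sub_eq_add]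
      split_ifs <;> first | omega | ring
    · intro t ht
      simp only [pairCol, Matrix.of_apply, ne_eq, Fin.ext_iff] at ht ⊢
      split_ifs <;> first | rfl | omega
  · rw [Matrix.mul_apply, Finset.sum_eq_zero fun t _ => ?_]
    · simp only [Lmc, Matrix.of_apply, Matrix.sub_apply, Matrix.smul_apply,
        Matrix.one_apply, smul_eq_mul, if_neg hi, Fin.ext_iff]
      split_ifs <;> first | omega | ring
    · simp only [pairCol, Matrix.of_apply]
      split_ifs <;> first | omega | ring

def evenIndex (hmn : 2 * m ≤ n) (i : Fin m) : Fin n := ⟨2 * i, by omega⟩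

def oddIndex (hmn : 2 * m ≤ n) (i : Fin m) : Fin n := ⟨2 * i + 1, by omega⟩

theorem Lmc_sub_smul_one_submatrix (c : k) (hmn : 2 * m ≤ n) :
    (Lmc n m c - c • 1).submatrix (evenIndex hmn) (oddIndex hmn) = 1 := by
  ext i j
  simp only [Lmc, evenIndex, oddIndex, Matrix.submatrix_apply, Matrix.of_apply, Matrix.sub_apply,
    Matrix.smul_apply, Matrix.one_apply, smul_eq_mul, Fin.ext_iff]
  split_ifs <;> first | omega | ring

theorem rank_Lmc_sub_smul_one [CharP k 2] (c : k) (hmn : 2 * m ≤ n) :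
    (Lmc n m c - c • 1).rank = m := by
  apply le_antisymm
  · rw [Lmc_sub_smul_one_eq_mul]
    exact (Matrix.rank_mul_le_left _ _).trans (Matrix.rank_le_width _)
  · calc m = (1 : Matrix (Fin m) (Fin m) k).rank := by rw [Matrix.rank_one, Fintype.card_fin]
      _ ≤ (Lmc n m c - c • 1).rank := by
        rw [← Lmc_sub_smul_one_submatrix c hmn]
        exact Matrix.rank_submatrix_le _ _ _

theorem Lmc_sq (c : k) (hmn : 2 * m ≤ n) : Lmc n m c ^ 2 = c ^ 2 • 1 := by
  ext i j
  rw [sq]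
  by_cases hi : (i : ℕ) < 2 * m
  · rw [Matrix.mul_apply_of_row_support_subsingleton _ ⟨i + 1 - 2 * (i % 2), by omega⟩]
    · simp only [Lmc, Matrix.of_apply, Matrix.smul_apply, Matrix.one_apply, smul_eq_mul,
        Fin.ext_iff]
      split_ifs <;> first | rfl | omega | ring
    · intro t ht
      simp only [Lmc, Matrix.of_apply, ne_eq, Fin.ext_iff] at ht ⊢
      split_ifs <;> first | rfl | omega
  · rw [Matrix.mul_apply_of_row_support_subsingleton _ i]
    · simp only [Lmc, Matrix.of_apply, Matrix.smul_apply, Matrix.one_apply, smul_eq_mul, if_neg hi,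
        eq_comm (a := j)]
      split_ifs <;> ring
    · intro t ht
      simp only [Lmc, Matrix.of_apply, if_neg hi, if_neg ht]

theorem Lhalf_sq_apply_zero (p : k) (hn : 1 < n) :
    (Lhalf n p ^ 2) ⟨0, by omega⟩ ⟨0, by omega⟩ = p := by
  rw [sq, Matrix.mul_apply_of_row_support_subsingleton _ (⟨1, hn⟩ : Fin n)]
  · simp [Lhalf]
  · intro j hj
    simp_all [Lhalf, Fin.ext_iff]

end

theorem stmt_15_general {k : Type*} [Field k] [CharP k 2] {n : ℕ}
    (c : k) (m₁ m₂ : ℕ) (hlt : m₁ < m₂)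
    (hm2 : 2 * m₂ ≤ n) :
    (¬ ∃ C : (Matrix (Fin n) (Fin n) k)ˣ,
        (C : Matrix (Fin n) (Fin n) k) * Lmc n m₁ c *
          (↑C⁻¹ : Matrix (Fin n) (Fin n) k) = Lmc n m₂ c) ∧
      (Even n → ∀ p : k, (¬ ∃ t : k, t ^ 2 = p) → ∀ m : ℕ, 1 ≤ m → 2 * m ≤ n →
        ¬ ∃ C : (Matrix (Fin n) (Fin n) k)ˣ,
          (C : Matrix (Fin n) (Fin n) k) * Lmc n m c *
            (↑C⁻¹ : Matrix (Fin n) (Fin n) k) = Lhalf n p) := by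
  constructor
  · rintro ⟨C, hC⟩
    have hrank := Matrix.rank_units_conj C (Lmc n m₁ c - c • 1)
    rw [Units.conj_sub_smul_one C (Lmc n m₁ c) c, hC, rank_Lmc_sub_smul_one c hm2,
      rank_Lmc_sub_smul_one c (by omega)] at hrank
    omega
  · rintro - p hp m hm hmn ⟨C, hC⟩
    have hsq : Lhalf n p ^ 2 = c ^ 2 • 1 := by
      rw [← hC, Units.conj_pow, Lmc_sq c hmn, Units.conj_smul_one]
    have h00 := Lhalf_sq_apply_zero p (n := n) (by omega)
    rw [hsq] at h00
    exact hp ⟨c, by simpa using h00⟩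

/-- Let k be a field of characteristic 2, n ≥ 2, c ∈ k nonzero,
and 1 ≤ m₁ < m₂ ≤ n/2. Then L_{m₁,c²,c} is not conjugate in GL(n,k) to
L_{m₂,c²,c}. Moreover, for even n and p ∈ k not a square, L_{m,c²,c} is not
conjugate to L_{n/2,p} for any 1 ≤ m ≤ n/2. -/
theorem stmt_15 {k : Type*} [Field k] [CharP k 2] {n : ℕ} (hn : 2 ≤ n)
    (c : k) (hc : c ≠ 0) (m₁ m₂ : ℕ) (hm1 : 1 ≤ m₁) (hlt : m₁ < m₂)
    (hm2 : 2 * m₂ ≤ n) :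
    (¬ ∃ C : (Matrix (Fin n) (Fin n) k)ˣ,
        (C : Matrix (Fin n) (Fin n) k) * Lmc n m₁ c *
          (↑C⁻¹ : Matrix (Fin n) (Fin n) k) = Lmc n m₂ c) ∧
      (Even n → ∀ p : k, (¬ ∃ t : k, t ^ 2 = p) → ∀ m : ℕ, 1 ≤ m → 2 * m ≤ n →
        ¬ ∃ C : (Matrix (Fin n) (Fin n) k)ˣ,
          (C : Matrix (Fin n) (Fin n) k) * Lmc n m c *
            (↑C⁻¹ : Matrix (Fin n) (Fin n) k) = Lhalf n p) :=
  stmt_15_general c m₁ m₂ hlt hm2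
end

section
/- Let k be a field of characteristic 2, n ≥ 2, and A ∈ GL(n,k). Let θ denote the map on SL(n,k) given by θ(X) = (Xᵀ)⁻¹. Then (θ ∘ Inn_A) ∘ (θ ∘ Inn_A) is the identity map on SL(n,k) if and only if A is symmetric (Aᵀ = A). -/
open Matrix

lemma stmt16_aux {k : Type*} [Field k] {n : ℕ} (a X : Matrix (Fin n) (Fin n) k)
    [Invertible a] [Invertible X] :
    ((a * ((a * X * a⁻¹)ᵀ)⁻¹ * a⁻¹)ᵀ)⁻¹ = aᵀ⁻¹ * a * X * a⁻¹ * aᵀ := by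
  have hX : Invertible Xᵀ := (Matrix.transposeInvertibleEquivInvertible X).symm ‹_›
  have hA : Invertible aᵀ := (Matrix.transposeInvertibleEquivInvertible a).symm ‹_›
  simp [Matrix.mul_inv_rev, Matrix.transpose_mul, Matrix.transpose_nonsing_inv,
    Matrix.inv_inv_of_invertible, Matrix.transpose_transpose, mul_assoc]

/-- Let k be a field of characteristic 2, n ≥ 2, A ∈ GL(n,k),
and θ(X) = (Xᵀ)⁻¹ on SL(n,k). Then (θ ∘ Inn_A) ∘ (θ ∘ Inn_A) is the identity
on SL(n,k) iff A is symmetric. -/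
theorem stmt_16 {k : Type*} [Field k] [CharP k 2] {n : ℕ} (hn : 2 ≤ n)
    (A : (Matrix (Fin n) (Fin n) k)ˣ) :
    (∀ X : Matrix (Fin n) (Fin n) k, X.det = 1 →
        (((A : Matrix (Fin n) (Fin n) k) *
            (((A : Matrix (Fin n) (Fin n) k) * X *
              (↑A⁻¹ : Matrix (Fin n) (Fin n) k))ᵀ)⁻¹ *
            (↑A⁻¹ : Matrix (Fin n) (Fin n) k))ᵀ)⁻¹ = X) ↔
      (A : Matrix (Fin n) (Fin n) k)ᵀ = (A : Matrix (Fin n) (Fin n) k) := by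
  set a : Matrix (Fin n) (Fin n) k := (A : Matrix (Fin n) (Fin n) k) with ha
  haveI hainv : Invertible a := Units.invertible A
  haveI hAt : Invertible aᵀ := (Matrix.transposeInvertibleEquivInvertible a).symm ‹_›
  have hcoe : (↑A⁻¹ : Matrix (Fin n) (Fin n) k) = a⁻¹ := Matrix.coe_units_inv A
  constructor
  · intro h
    -- every det-1 matrix commutes with a⁻¹ * aᵀ
    have key : ∀ X : Matrix (Fin n) (Fin n) k, X.det = 1 →
        X * (a⁻¹ * aᵀ) = (a⁻¹ * aᵀ) * X := by
      intro X hX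
      haveI hXinv : Invertible X := X.invertibleOfIsUnitDet (by simp [hX])
      have h1 := h X hX
      rw [hcoe, stmt16_aux a X] at h1
      have h1' : (aᵀ⁻¹ * a) * (X * (a⁻¹ * aᵀ)) = X := by
        calc (aᵀ⁻¹ * a) * (X * (a⁻¹ * aᵀ)) = aᵀ⁻¹ * a * X * a⁻¹ * aᵀ := by
              simp only [mul_assoc]
          _ = X := h1
      have hCB : (a⁻¹ * aᵀ) * (aᵀ⁻¹ * a) = 1 := by
        rw [mul_assoc, ← mul_assoc aᵀ, Matrix.mul_inv_of_invertible, one_mul,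
          Matrix.inv_mul_of_invertible]
      calc X * (a⁻¹ * aᵀ)
          = (a⁻¹ * aᵀ) * ((aᵀ⁻¹ * a) * (X * (a⁻¹ * aᵀ))) := by
            conv_rhs => rw [← mul_assoc, hCB, one_mul]
        _ = (a⁻¹ * aᵀ) * X := by rw [h1']
    -- a⁻¹ * aᵀ commutes with all transvections, hence is scalar
    have hcomm : ∀ t : Matrix.TransvectionStruct (Fin n) k,
        Commute t.toMatrix (a⁻¹ * aᵀ) := by
      intro t
      exact (key t.toMatrix t.det)
    obtain ⟨c, hc⟩ := Matrix.mem_range_scalar_of_commute_transvectionStruct hcomm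
    have hscalar : a⁻¹ * aᵀ = c • (1 : Matrix (Fin n) (Fin n) k) := by
      rw [← hc]; ext i j
      by_cases hij : i = j <;>
        simp [Matrix.scalar_apply, Matrix.diagonal_apply, Matrix.one_apply, hij]
    have hat : aᵀ = c • a := by
      have := congrArg (fun M => a * M) hscalar
      simpa [← mul_assoc, Matrix.mul_inv_of_invertible, mul_smul_comm] using this
    have haa : a = (c * c) • a := by
      conv_lhs => rw [← Matrix.transpose_transpose a, hat, Matrix.transpose_smul, hat,
        smul_smul]
    have hc1 : c = 1 := by
      have hane : a ≠ 0 := by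
        intro h0
        have : (1 : Matrix (Fin n) (Fin n) k) = 0 := by
          rw [← Matrix.inv_mul_of_invertible a, h0, mul_zero]
        haveI hne : Nonempty (Fin n) := ⟨⟨0, lt_of_lt_of_le two_pos hn⟩⟩
        exact one_ne_zero this
      have h0 : (c * c - 1) • a = 0 := by
        rw [sub_smul, one_smul, ← haa, sub_self]
      rcases smul_eq_zero.mp h0 with h2 | h2
      · have hcc : c * c = 1 := by linear_combination h2
        rcases mul_self_eq_one_iff.mp hcc with h3 | h3
        · exact h3
        · rw [h3]; exact CharTwo.neg_eq 1
      · exact absurd h2 hane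
    rw [hat, hc1, one_smul]
  · intro hsym X hX
    haveI hXinv : Invertible X := X.invertibleOfIsUnitDet (by simp [hX])
    rw [hcoe, stmt16_aux a X, hsym]
    rw [Matrix.inv_mul_of_invertible, one_mul, mul_assoc, Matrix.inv_mul_of_invertible,
      mul_one]
end

section
/- Let k be a field of characteristic 2, n ≥ 2, and let A, B ∈ GL(n,k) be symmetric. Let θ denote the map on SL(n,k) given by θ(X) = (Xᵀ)⁻¹. Then there exists C ∈ GL(n,k) with Inn_C ∘ (θ ∘ Inn_A) ∘ Inn_C⁻¹ = θ ∘ Inn_B as maps on SL(n,k) if and only if A is congruent to a scalar multiple of B, i.e., there exist Q ∈ GL(n,k) and a nonzero p ∈ k with Qᵀ·A·Q = p·B. -/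
/-! Writing `θ X = (Xᵀ)⁻¹`, symmetry of `A` and `B` gives `θ (B X B⁻¹) = B⁻¹ (θ X) B` and
`C θ(A C⁻¹ X C A⁻¹) C⁻¹ = D (θ X) D⁻¹` with `D = C A⁻¹ Cᵀ`. As `θ` permutes `SL(n,k)`, the
condition says that `D` and `B⁻¹` induce the same inner automorphism of `SL(n,k)`, i.e. that
`B D` centralises every transvection, hence is a nonzero scalar `u`. Inverting `D = u B⁻¹`
gives `(C⁻¹)ᵀ A C⁻¹ = u⁻¹ B`. -/

open Matrix

namespace Matrix

variable {n R : Type*} [Fintype n] [DecidableEq n] [CommRing R]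

theorem exists_units_eq_smul_one_of_forall_det_eq_one_commute {M : Matrix n n R}
    (hM : IsUnit M.det) (h : ∀ Y : Matrix n n R, Y.det = 1 → Commute Y M) :
    ∃ u : Rˣ, M = u • (1 : Matrix n n R) := by
  obtain ⟨r, rfl⟩ := mem_range_scalar_of_commute_transvectionStruct fun t => h _ t.det
  cases isEmpty_or_nonempty n
  · exact ⟨1, Subsingleton.elim _ _⟩
  have hr : IsUnit r := by simpa [Fintype.card_ne_zero] using hM
  exact ⟨hr.unit, by rw [Units.smul_def, hr.unit_spec, scalar_apply, smul_one_eq_diagonal]⟩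

theorem exists_units_eq_smul_of_forall_det_eq_one_conj_eq {D E : Matrix n n R}
    (hD : IsUnit D.det) (hE : IsUnit E.det)
    (h : ∀ Y : Matrix n n R, Y.det = 1 → D * Y * D⁻¹ = E * Y * E⁻¹) :
    ∃ u : Rˣ, D = u • E := by
  have hcomm : ∀ Y : Matrix n n R, Y.det = 1 → Commute Y (E⁻¹ * D) := fun Y hY => by
    calc Y * (E⁻¹ * D) = E⁻¹ * (E * Y * E⁻¹) * D := by
          rw [← Matrix.mul_assoc E⁻¹, ← Matrix.mul_assoc E⁻¹, nonsing_inv_mul _ hE,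
            Matrix.one_mul, Matrix.mul_assoc]
      _ = E⁻¹ * (D * Y * D⁻¹) * D := by rw [h Y hY]
      _ = E⁻¹ * D * Y := by simp [Matrix.mul_assoc, nonsing_inv_mul _ hD]
  obtain ⟨u, hu⟩ := exists_units_eq_smul_one_of_forall_det_eq_one_commute
    (by rw [det_mul]; exact (isUnit_nonsing_inv_det _ hE).mul hD) hcomm
  refine ⟨u, ?_⟩
  calc D = E * (E⁻¹ * D) := by rw [mul_nonsing_inv_cancel_left _ _ hE]
    _ = u • E := by rw [hu, mul_smul_comm, Matrix.mul_one]

theorem forall_det_eq_one_conj_transpose_inv_eq_iff {D E : Matrix n n R}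
    (hD : IsUnit D.det) (hE : IsUnit E.det) :
    (∀ X : Matrix n n R, X.det = 1 → D * (Xᵀ)⁻¹ * D⁻¹ = E * (Xᵀ)⁻¹ * E⁻¹) ↔
      ∃ u : Rˣ, D = u • E := by
  refine ⟨fun h => exists_units_eq_smul_of_forall_det_eq_one_conj_eq hD hE fun Y hY => ?_, ?_⟩
  · have := h (Y⁻¹)ᵀ (by simp [hY])
    rwa [transpose_transpose, nonsing_inv_nonsing_inv _ (by simp [hY])] at this
  · rintro ⟨u, rfl⟩ X -
    rw [inv_smul' _ u hE]
    simp [Units.smul_def, smul_smul]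

theorem conj_transpose_inv_conj_eq_of_transpose_eq {A C : Matrix n n R} (hA : IsUnit A.det)
    (hC : IsUnit C.det) (hAt : Aᵀ = A) (X : Matrix n n R) :
    C * ((A * (C⁻¹ * X * C) * A⁻¹)ᵀ)⁻¹ * C⁻¹ =
      (C * A⁻¹ * Cᵀ) * (Xᵀ)⁻¹ * (C * A⁻¹ * Cᵀ)⁻¹ := by
  simp [transpose_nonsing_inv, Matrix.mul_inv_rev, hAt, Matrix.mul_assoc,
    nonsing_inv_nonsing_inv _ hA,
    nonsing_inv_nonsing_inv _ (isUnit_det_transpose _ hC)]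

theorem transpose_inv_conj_eq_of_transpose_eq {B : Matrix n n R} (hB : IsUnit B.det)
    (hBt : Bᵀ = B) (X : Matrix n n R) :
    ((B * X * B⁻¹)ᵀ)⁻¹ = B⁻¹ * (Xᵀ)⁻¹ * B⁻¹⁻¹ := by
  simpa using conj_transpose_inv_conj_eq_of_transpose_eq (C := 1) hB (by simp) hBt X

theorem isUnit_det_mul_inv_mul_transpose {A C : Matrix n n R} (hA : IsUnit A.det)
    (hC : IsUnit C.det) : IsUnit (C * A⁻¹ * Cᵀ).det := by
  rw [det_mul, det_mul, det_transpose]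
  exact (hC.mul (isUnit_nonsing_inv_det _ hA)).mul hC

theorem mul_inv_mul_transpose_eq_smul_inv_iff {A B C : Matrix n n R} (hA : IsUnit A.det)
    (hB : IsUnit B.det) (hC : IsUnit C.det) (u : Rˣ) :
    C * A⁻¹ * Cᵀ = u • B⁻¹ ↔ (C⁻¹)ᵀ * A * C⁻¹ = u⁻¹ • B := by
  have hlhs : (C * A⁻¹ * Cᵀ)⁻¹ = (C⁻¹)ᵀ * A * C⁻¹ := by
    simp only [Matrix.mul_inv_rev, transpose_nonsing_inv, nonsing_inv_nonsing_inv _ hA,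
      Matrix.mul_assoc]
  have hrhs : (u • B⁻¹)⁻¹ = u⁻¹ • B := by
    rw [inv_smul' _ _ (isUnit_nonsing_inv_det _ hB), nonsing_inv_nonsing_inv _ hB]
  constructor
  · intro h
    rw [← hlhs, h, hrhs]
  · intro h
    refine inv_inj ?_ ?_
    · rw [hlhs, hrhs, h]
    · exact isUnit_det_mul_inv_mul_transpose hA hC

end Matrix

theorem stmt_17_general {k : Type*} [Field k] {n : ℕ}
    (A B : (Matrix (Fin n) (Fin n) k)ˣ)
    (hA : (A : Matrix (Fin n) (Fin n) k)ᵀ = (A : Matrix (Fin n) (Fin n) k))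
    (hB : (B : Matrix (Fin n) (Fin n) k)ᵀ = (B : Matrix (Fin n) (Fin n) k)) :
    (∃ C : (Matrix (Fin n) (Fin n) k)ˣ, ∀ X : Matrix (Fin n) (Fin n) k, X.det = 1 →
        (C : Matrix (Fin n) (Fin n) k) *
          (((A : Matrix (Fin n) (Fin n) k) *
            ((↑C⁻¹ : Matrix (Fin n) (Fin n) k) * X * (C : Matrix (Fin n) (Fin n) k)) *
            (↑A⁻¹ : Matrix (Fin n) (Fin n) k))ᵀ)⁻¹ *
          (↑C⁻¹ : Matrix (Fin n) (Fin n) k) =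
        (((B : Matrix (Fin n) (Fin n) k) * X * (↑B⁻¹ : Matrix (Fin n) (Fin n) k))ᵀ)⁻¹) ↔
      ∃ Q : (Matrix (Fin n) (Fin n) k)ˣ, ∃ p : k, p ≠ 0 ∧
        (Q : Matrix (Fin n) (Fin n) k)ᵀ * (A : Matrix (Fin n) (Fin n) k) *
          (Q : Matrix (Fin n) (Fin n) k) = p • (B : Matrix (Fin n) (Fin n) k) := by
  have hdet (M : (Matrix (Fin n) (Fin n) k)ˣ) : IsUnit (M : Matrix (Fin n) (Fin n) k).det :=
    (Matrix.isUnit_iff_isUnit_det _).mp M.isUnit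
  simp only [coe_units_inv, conj_transpose_inv_conj_eq_of_transpose_eq (hdet A) (hdet _) hA,
    transpose_inv_conj_eq_of_transpose_eq (hdet B) hB]
  conv_rhs => rw [inv_surjective.exists]
  refine exists_congr fun C => ?_
  rw [forall_det_eq_one_conj_transpose_inv_eq_iff
    (isUnit_det_mul_inv_mul_transpose (hdet A) (hdet C)) (isUnit_nonsing_inv_det _ (hdet B))]
  conv_rhs => rw [← Units.exists_iff_ne_zero, inv_surjective.exists]
  refine exists_congr fun u => ?_
  rw [coe_units_inv, mul_inv_mul_transpose_eq_smul_inv_iff (hdet A) (hdet B) (hdet C),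
    Units.smul_def]

/-- Let k be a field of characteristic 2, n ≥ 2, and
A, B ∈ GL(n,k) symmetric. With θ(X) = (Xᵀ)⁻¹, there exists C ∈ GL(n,k) with
Inn_C ∘ (θ ∘ Inn_A) ∘ Inn_C⁻¹ = θ ∘ Inn_B on SL(n,k) iff A is congruent to a
scalar multiple of B: ∃ Q ∈ GL(n,k) and nonzero p ∈ k with Qᵀ·A·Q = p·B. -/
theorem stmt_17 {k : Type*} [Field k] [CharP k 2] {n : ℕ} (hn : 2 ≤ n)
    (A B : (Matrix (Fin n) (Fin n) k)ˣ)
    (hA : (A : Matrix (Fin n) (Fin n) k)ᵀ = (A : Matrix (Fin n) (Fin n) k))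
    (hB : (B : Matrix (Fin n) (Fin n) k)ᵀ = (B : Matrix (Fin n) (Fin n) k)) :
    (∃ C : (Matrix (Fin n) (Fin n) k)ˣ, ∀ X : Matrix (Fin n) (Fin n) k, X.det = 1 →
        (C : Matrix (Fin n) (Fin n) k) *
          (((A : Matrix (Fin n) (Fin n) k) *
            ((↑C⁻¹ : Matrix (Fin n) (Fin n) k) * X * (C : Matrix (Fin n) (Fin n) k)) *
            (↑A⁻¹ : Matrix (Fin n) (Fin n) k))ᵀ)⁻¹ *
          (↑C⁻¹ : Matrix (Fin n) (Fin n) k) =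
        (((B : Matrix (Fin n) (Fin n) k) * X * (↑B⁻¹ : Matrix (Fin n) (Fin n) k))ᵀ)⁻¹) ↔
      ∃ Q : (Matrix (Fin n) (Fin n) k)ˣ, ∃ p : k, p ≠ 0 ∧
        (Q : Matrix (Fin n) (Fin n) k)ᵀ * (A : Matrix (Fin n) (Fin n) k) *
          (Q : Matrix (Fin n) (Fin n) k) = p • (B : Matrix (Fin n) (Fin n) k) :=
  stmt_17_general A B hA hB
end

section
/- Let k be a field of characteristic 2 in which every element is a square (for example, a finite field or an algebraically closed field of characteristic 2), and let n ≥ 1. Then every symmetric matrix A ∈ GL(n,k) that is not alternate (i.e., has at least one nonzero diagonal entry) is congruent to the identity matrix: there exists Q ∈ GL(n,k) with Qᵀ·A·Q = Id. Consequently there is exactly one isomorphism class of outer k-involutions θ ∘ Inn_A of SL(n,k) with A symmetric non-alternate. -/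
open Matrix Module
open LinearMap (BilinForm)

/-!
Gram–Schmidt with square roots: take a vector `x` with `B x x ≠ 0`, rescale it to length `1`, and
recurse on its orthogonal complement, on which `B` stays symmetric and nondegenerate. The recursion
needs an anisotropic vector in the complement, which in characteristic `2` can fail (the complement
may be alternate). Then `x + w`, for any `w ≠ 0` orthogonal to `x`, has the same length as `x` and
its orthogonal complement is not alternate.

Congruent matrices `A = Cᵀ B C` give involutions `θ ∘ Inn_A` and `θ ∘ Inn_B` conjugate under
`Inn_C`, and any two symmetric non-alternate `A`, `B` are congruent, both being congruent to `1`.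
-/

namespace LinearMap.BilinForm

variable {K V : Type*} [Field K] [AddCommGroup V] [Module K V] {B : BilinForm K V}

theorem exists_orthogonal_pair_self_ne_zero (hB : B.IsSymm) (hnd : B.Nondegenerate)
    {x w : V} (hx : B x x ≠ 0) (hw : w ≠ 0) (hxw : B x w = 0) :
    ∃ x' u, B x' x' ≠ 0 ∧ B x' u = 0 ∧ B u u ≠ 0 := by
  by_cases h : ∃ u, B x u = 0 ∧ B u u ≠ 0
  · exact ⟨x, h.choose, hx, h.choose_spec⟩
  push Not at h
  have hwx : B w x = 0 := by rw [hB.eq, hxw]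
  have hww : B w w = 0 := h w hxw
  obtain ⟨z, hwz⟩ : ∃ z, B w z ≠ 0 := by
    by_contra! hz
    exact hw (hnd.1 w hz)
  set w' := z - (B x z / B x x) • x
  have hxw' : B x w' = 0 := by
    simp only [w', sub_right, smul_right]
    field_simp
    ring
  have hw'x : B w' x = 0 := by rw [hB.eq, hxw']
  have hw'w' : B w' w' = 0 := h w' hxw'
  have hww' : B w w' = B w z := by
    simp only [w', sub_right, smul_right, hwx, mul_zero, sub_zero]
  have hw'w : B w' w = B w z := by rw [hB.eq, hww']
  set c := B w z / B x x
  refine ⟨x + w, w' - c • (x + w), ?_, ?_, ?_⟩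
  · simpa only [add_left, add_right, hwx, hxw, hww, add_zero]
  · simp only [add_left, add_right, sub_right, smul_right, hwx, hxw, hww, hxw', hww', c]
    field_simp
    ring
  · have huu : B (w' - c • (x + w)) (w' - c • (x + w)) = -(B w z ^ 2 / B x x) := by
      simp only [add_left, add_right, sub_left, sub_right, smul_left, smul_right, hwx, hxw, hww,
        hxw', hww', hw'x, hw'w, hw'w', c]
      field_simp
      ring
    rw [huu]
    exact neg_ne_zero.2 (div_ne_zero (pow_ne_zero 2 hwz) hx)

theorem mem_orthogonal_span_singleton_iff {x y : V} : y ∈ B.orthogonal (K ∙ x) ↔ B x y = 0 := by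
  rw [orthogonal_span_singleton_eq_toLin_ker]
  rfl

theorem finrank_orthogonal_span_singleton_add_one [FiniteDimensional K V] {x : V}
    (hx : B x x ≠ 0) : finrank K (B.orthogonal (K ∙ x)) + 1 = finrank K V := by
  rw [← Submodule.finrank_add_eq_of_isCompl (isCompl_span_singleton_orthogonal hx),
    finrank_span_singleton (ne_zero_of_map hx), add_comm]

theorem exists_orthogonal_pair_self_ne_zero_of_two_le_finrank [FiniteDimensional K V]
    (hB : B.IsSymm) (hnd : B.Nondegenerate) {x : V} (hx : B x x ≠ 0) (hV : 2 ≤ finrank K V) :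
    ∃ x' u, B x' x' ≠ 0 ∧ B x' u = 0 ∧ B u u ≠ 0 := by
  obtain ⟨w, hw, hw0⟩ := Submodule.exists_mem_ne_zero_of_ne_bot (p := B.orthogonal (K ∙ x)) <|
      fun hbot => by
    have := finrank_orthogonal_span_singleton_add_one hx
    rw [hbot, finrank_bot] at this
    omega
  exact exists_orthogonal_pair_self_ne_zero hB hnd hx hw0
    (mem_orthogonal_span_singleton_iff.1 hw)

theorem exists_smul_self_eq_one (hsq : ∀ a : K, ∃ b, b ^ 2 = a) {x : V} (hx : B x x ≠ 0) :
    ∃ c : K, B (c • x) (c • x) = 1 := by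
  obtain ⟨b, hb⟩ := hsq (B x x)
  have hb0 : b ≠ 0 := by rintro rfl; exact hx (by simpa using hb.symm)
  refine ⟨b⁻¹, ?_⟩
  simp only [smul_left, smul_right, ← hb]
  field_simp

theorem exists_orthonormal_of_forall_exists_sq [FiniteDimensional K V]
    (hsq : ∀ a : K, ∃ b, b ^ 2 = a) (hB : B.IsSymm) (hnd : B.Nondegenerate)
    (hV : finrank K V = 0 ∨ ∃ x, B x x ≠ 0) :
    ∃ v : Fin (finrank K V) → V, ∀ i j, B (v i) (v j) = if i = j then 1 else 0 := by
  induction hd : finrank K V generalizing V with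
  | zero => exact ⟨finZeroElim, fun i => i.elim0⟩
  | succ d ih =>
    obtain ⟨x, hx, hxW⟩ : ∃ x, B x x ≠ 0 ∧ (d = 0 ∨ ∃ u, B x u = 0 ∧ B u u ≠ 0) := by
      obtain ⟨x, hx⟩ := hV.resolve_left (by omega)
      rcases eq_or_ne d 0 with rfl | hd0
      · exact ⟨x, hx, Or.inl rfl⟩
      · obtain ⟨x', u, hx', hu⟩ :=
          exists_orthogonal_pair_self_ne_zero_of_two_le_finrank hB hnd hx (by omega)
        exact ⟨x', hx', Or.inr ⟨u, hu⟩⟩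
    obtain ⟨c, hc⟩ := exists_smul_self_eq_one hsq hx
    set x₀ := c • x
    set W := B.orthogonal (K ∙ x₀)
    have hx₀ : B x₀ x₀ ≠ 0 := by rw [hc]; exact one_ne_zero
    have hW : finrank K W = d :=
      Nat.succ_injective ((finrank_orthogonal_span_singleton_add_one hx₀).trans hd)
    have hWB : finrank K W = 0 ∨ ∃ u : W, B.restrict W u u ≠ 0 := by
      refine hxW.imp hW.trans fun ⟨u, hxu, hu⟩ => ⟨⟨u, ?_⟩, hu⟩
      rw [mem_orthogonal_span_singleton_iff, smul_left, hxu, mul_zero]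
    obtain ⟨v, hv⟩ := ih (hB.restrict W)
      (restrict_nondegenerate_orthogonal_spanSingleton B hnd hB.isRefl hx₀) hWB hW
    refine ⟨Fin.cons x₀ fun i => v i, fun i j => ?_⟩
    have hx₀v : ∀ i, B x₀ (v i) = 0 := fun i => mem_orthogonal_span_singleton_iff.1 (v i).2
    refine Fin.cases ?_ (fun i => ?_) i <;> refine Fin.cases ?_ (fun j => ?_) j
    · simp [hc]
    · simp [hx₀v, (Fin.succ_ne_zero j).symm]
    · simp [hB.eq _ x₀, hx₀v, Fin.succ_ne_zero i]
    · simpa using hv i j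

end LinearMap.BilinForm

namespace Matrix

variable {ι R : Type*} [Fintype ι] [DecidableEq ι] [CommRing R]

theorem isUnit_of_transpose_mul_mul_eq_one {A Q : Matrix ι ι R} (h : Qᵀ * A * Q = 1) :
    IsUnit Q := by
  rw [isUnit_iff_isUnit_det]
  have hdet := congrArg det h
  rw [det_mul, det_mul, det_transpose, det_one] at hdet
  exact IsUnit.of_mul_eq_one_right _ hdet

theorem transpose_mul_mul_units_mul_inv_eq {A B M : Matrix ι ι R} {Q P : (Matrix ι ι R)ˣ}
    (hQ : (Q : Matrix ι ι R)ᵀ * A * Q = M) (hP : (P : Matrix ι ι R)ᵀ * B * P = M) :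
    ((P * Q⁻¹ : (Matrix ι ι R)ˣ) : Matrix ι ι R)ᵀ * B *
      ((P * Q⁻¹ : (Matrix ι ι R)ˣ) : Matrix ι ι R) = A := by
  have hA : A = (↑Q⁻¹ : Matrix ι ι R)ᵀ * M * (↑Q⁻¹ : Matrix ι ι R) := by
    rw [← hQ, ← Matrix.mul_assoc, ← Matrix.mul_assoc, ← transpose_mul, Units.mul_inv,
      transpose_one, Matrix.one_mul, Matrix.mul_assoc, Units.mul_inv, Matrix.mul_one]
  rw [hA, ← hP, Units.val_mul, transpose_mul]
  simp only [Matrix.mul_assoc]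

theorem conj_inv_transpose_conj_eq_of_transpose_mul_mul_eq {A B C : Matrix ι ι R}
    (hB : IsUnit B.det) (hC : IsUnit C.det) (h : Cᵀ * B * C = A) (X : Matrix ι ι R) :
    C * ((A * (C⁻¹ * X * C) * A⁻¹)ᵀ)⁻¹ * C⁻¹ = ((B * X * B⁻¹)ᵀ)⁻¹ := by
  have hCt : IsUnit Cᵀ.det := by rwa [det_transpose]
  have hBt : IsUnit Bᵀ.det := by rwa [det_transpose]
  subst h
  simp only [Matrix.mul_inv_rev, transpose_mul, transpose_nonsing_inv, transpose_transpose,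
    nonsing_inv_nonsing_inv _ hC, nonsing_inv_nonsing_inv _ hCt, nonsing_inv_nonsing_inv _ hBt,
    Matrix.mul_assoc]
  simp only [mul_nonsing_inv_cancel_left _ _ hC, nonsing_inv_mul_cancel_left _ _ hCt,
    mul_nonsing_inv _ hC, Matrix.mul_one]

theorem exists_transpose_mul_mul_eq_one {K : Type*} [Field K] (hsq : ∀ a : K, ∃ b, b ^ 2 = a)
    {A : Matrix ι ι K} (hA : Aᵀ = A) (hdet : A.det ≠ 0) (hdiag : ∃ i, A i i ≠ 0) :
    ∃ Q : (Matrix ι ι K)ˣ, (Q : Matrix ι ι K)ᵀ * A * Q = 1 := by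
  obtain ⟨i, hi⟩ := hdiag
  obtain ⟨v, hv⟩ := (toBilin' A).exists_orthonormal_of_forall_exists_sq hsq
    (isSymm_toBilin'_iff_isSymm.2 hA)
    (LinearMap.BilinForm.nondegenerate_toBilin'_of_det_ne_zero' A hdet)
    (Or.inr ⟨Pi.single i 1, by simpa using hi⟩)
  let e : ι ≃ Fin (finrank K (ι → K)) :=
    (Fintype.equivFin ι).trans (finCongr (finrank_fintype_fun_eq_card K).symm)
  have hQ : (of fun i j => v (e j) i)ᵀ * A * of (fun i j => v (e j) i) = 1 := by
    ext i j
    have := hv (e i) (e j)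
    simp only [e.injective.eq_iff, toBilin'_apply, ← one_apply] at this
    rw [← this, Finset.sum_comm]
    simp only [Matrix.mul_apply, Finset.sum_mul, transpose_apply, of_apply]
  exact ⟨(isUnit_of_transpose_mul_mul_eq_one hQ).unit, hQ⟩

end Matrix

theorem stmt_18_general {k : Type*} [Field k]
    (hsq : ∀ x : k, ∃ y : k, y ^ 2 = x) {n : ℕ} :
    (∀ A : (Matrix (Fin n) (Fin n) k)ˣ,
        (A : Matrix (Fin n) (Fin n) k)ᵀ = (A : Matrix (Fin n) (Fin n) k) →
        (∃ i : Fin n, (A : Matrix (Fin n) (Fin n) k) i i ≠ 0) →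
        ∃ Q : (Matrix (Fin n) (Fin n) k)ˣ,
          (Q : Matrix (Fin n) (Fin n) k)ᵀ * (A : Matrix (Fin n) (Fin n) k) *
            (Q : Matrix (Fin n) (Fin n) k) = 1) ∧
      (∀ A B : (Matrix (Fin n) (Fin n) k)ˣ,
        (A : Matrix (Fin n) (Fin n) k)ᵀ = (A : Matrix (Fin n) (Fin n) k) →
        (∃ i : Fin n, (A : Matrix (Fin n) (Fin n) k) i i ≠ 0) →
        (B : Matrix (Fin n) (Fin n) k)ᵀ = (B : Matrix (Fin n) (Fin n) k) →
        (∃ i : Fin n, (B : Matrix (Fin n) (Fin n) k) i i ≠ 0) →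
        ∃ C : (Matrix (Fin n) (Fin n) k)ˣ, ∀ X : Matrix (Fin n) (Fin n) k, X.det = 1 →
          (C : Matrix (Fin n) (Fin n) k) *
            (((A : Matrix (Fin n) (Fin n) k) *
              ((↑C⁻¹ : Matrix (Fin n) (Fin n) k) * X * (C : Matrix (Fin n) (Fin n) k)) *
              (↑A⁻¹ : Matrix (Fin n) (Fin n) k))ᵀ)⁻¹ *
            (↑C⁻¹ : Matrix (Fin n) (Fin n) k) =
          (((B : Matrix (Fin n) (Fin n) k) * X *
            (↑B⁻¹ : Matrix (Fin n) (Fin n) k))ᵀ)⁻¹) := by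
  have isUnit_det (A : (Matrix (Fin n) (Fin n) k)ˣ) : IsUnit (A : Matrix (Fin n) (Fin n) k).det :=
    (isUnit_iff_isUnit_det _).1 A.isUnit
  have congr_one (A : (Matrix (Fin n) (Fin n) k)ˣ) (hA : (A : Matrix (Fin n) (Fin n) k)ᵀ = A)
      (hdiag : ∃ i, (A : Matrix (Fin n) (Fin n) k) i i ≠ 0) :
      ∃ Q : (Matrix (Fin n) (Fin n) k)ˣ, (Q : Matrix (Fin n) (Fin n) k)ᵀ * A * Q = 1 :=
    exists_transpose_mul_mul_eq_one hsq hA (isUnit_det A).ne_zero hdiag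
  refine ⟨congr_one, fun A B hA hAdiag hB hBdiag => ?_⟩
  obtain ⟨Q, hQ⟩ := congr_one A hA hAdiag
  obtain ⟨P, hP⟩ := congr_one B hB hBdiag
  refine ⟨P * Q⁻¹, fun X _ => ?_⟩
  simp only [coe_units_inv]
  exact conj_inv_transpose_conj_eq_of_transpose_mul_mul_eq (isUnit_det B) (isUnit_det _)
    (transpose_mul_mul_units_mul_inv_eq hQ hP) X

/-- Let k be a field of characteristic 2 in which every element
is a square, and n ≥ 1. Then every symmetric non-alternate A ∈ GL(n,k) (i.e.
with some nonzero diagonal entry) is congruent to the identity matrix.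
Consequently, with θ(X) = (Xᵀ)⁻¹, any two outer involutions θ ∘ Inn_A,
θ ∘ Inn_B of SL(n,k) with A, B symmetric non-alternate are isomorphic. -/
theorem stmt_18 {k : Type*} [Field k] [CharP k 2]
    (hsq : ∀ x : k, ∃ y : k, y ^ 2 = x) {n : ℕ} (hn : 1 ≤ n) :
    (∀ A : (Matrix (Fin n) (Fin n) k)ˣ,
        (A : Matrix (Fin n) (Fin n) k)ᵀ = (A : Matrix (Fin n) (Fin n) k) →
        (∃ i : Fin n, (A : Matrix (Fin n) (Fin n) k) i i ≠ 0) →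
        ∃ Q : (Matrix (Fin n) (Fin n) k)ˣ,
          (Q : Matrix (Fin n) (Fin n) k)ᵀ * (A : Matrix (Fin n) (Fin n) k) *
            (Q : Matrix (Fin n) (Fin n) k) = 1) ∧
      (∀ A B : (Matrix (Fin n) (Fin n) k)ˣ,
        (A : Matrix (Fin n) (Fin n) k)ᵀ = (A : Matrix (Fin n) (Fin n) k) →
        (∃ i : Fin n, (A : Matrix (Fin n) (Fin n) k) i i ≠ 0) →
        (B : Matrix (Fin n) (Fin n) k)ᵀ = (B : Matrix (Fin n) (Fin n) k) →
        (∃ i : Fin n, (B : Matrix (Fin n) (Fin n) k) i i ≠ 0) →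
        ∃ C : (Matrix (Fin n) (Fin n) k)ˣ, ∀ X : Matrix (Fin n) (Fin n) k, X.det = 1 →
          (C : Matrix (Fin n) (Fin n) k) *
            (((A : Matrix (Fin n) (Fin n) k) *
              ((↑C⁻¹ : Matrix (Fin n) (Fin n) k) * X * (C : Matrix (Fin n) (Fin n) k)) *
              (↑A⁻¹ : Matrix (Fin n) (Fin n) k))ᵀ)⁻¹ *
            (↑C⁻¹ : Matrix (Fin n) (Fin n) k) =
          (((B : Matrix (Fin n) (Fin n) k) * X *
            (↑B⁻¹ : Matrix (Fin n) (Fin n) k))ᵀ)⁻¹) :=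
  stmt_18_general hsq
end
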